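/- arXiv:1704.01644 — 13 statements merged into one kernel-verified Lean document; each statement's English description precedes it below -/
import Mathlib

section
/- For every integer r ≥ 0, the matrix M_r is positive semidefinite. -/
/-!
`C(|S ∩ T|, k)` counts the `k`-subsets `P` with `P ⊆ S` and `P ⊆ T`, so the matrix
`(C(|S ∩ T|, k))_{S,T}` is the Gram matrix `B Bᵀ` of the incidence matrix `B` between sets and
their `k`-subsets, hence positive semidefinite. `M_r` is the sum of this matrix for `k = 2` and of
its reindexing by complements.
-/

/-- The matrix `M_r`, indexed by subsets `S, T ⊆ [r]`, with entry
`C(|S ∩ T|, 2) + C(|Sᶜ ∩ Tᶜ|, 2)`. -/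
def Mmat (r : ℕ) : Matrix (Finset (Fin r)) (Finset (Fin r)) ℝ :=
  fun S T => ((S ∩ T).card.choose 2 : ℝ) + ((Sᶜ ∩ Tᶜ).card.choose 2 : ℝ)

open Finset Matrix

theorem Finset.powersetCard_inter {α : Type*} [DecidableEq α] (k : ℕ) (S T : Finset α) :
    powersetCard k (S ∩ T) = powersetCard k S ∩ powersetCard k T := by
  ext P
  simp only [mem_powersetCard, mem_inter, subset_inter_iff]
  tauto

variable {α : Type*} [Fintype α] [DecidableEq α]

def kSubsetIncidence (k : ℕ) : Matrix (Finset α) (Finset α) ℝ :=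
  of fun S P => if P ∈ powersetCard k S then 1 else 0

theorem kSubsetIncidence_mul_transpose (k : ℕ) :
    kSubsetIncidence k * (kSubsetIncidence k)ᵀ =
      of fun S T : Finset α => ((#(S ∩ T)).choose k : ℝ) := by
  ext S T
  simp only [kSubsetIncidence, mul_apply, transpose_apply, of_apply, ite_zero_mul_ite_zero,
    one_mul, sum_boole, ← mem_inter, ← powersetCard_inter, filter_mem_eq_inter, univ_inter,
    card_powersetCard]

theorem posSemidef_choose_card_inter (k : ℕ) :
    (of fun S T : Finset α => ((#(S ∩ T)).choose k : ℝ)).PosSemidef := by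
  rw [← kSubsetIncidence_mul_transpose]
  simpa using posSemidef_self_mul_conjTranspose (kSubsetIncidence (α := α) k)

/-- For every integer `r ≥ 0`, the matrix `M_r` is positive semidefinite. -/
theorem Mmat_posSemidef (r : ℕ) : (Mmat r).PosSemidef := by
  have hchoose := posSemidef_choose_card_inter (α := Fin r) 2
  -- `Mmat r` unfolds definitionally to this sum.
  exact hchoose.add (hchoose.submatrix compl)
end

section
/- Let r ≥ 4 and let V ∈ ℝ^(r+1) be an eigenvector of the (r+1) × (r+1) matrix N_r with eigenvalue λ. Define Φ(V) ∈ ℝ^(𝒫([r])) by (Φ(V))_T = V_{|T|} for each T ⊆ [r]. Then Φ(V) is an eigenvector of M_r with eigenvalue λ. -/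
/-- The quotient matrix `N_r`, indexed by `s, t ∈ {0, …, r}`, with entry
`N_r(s,t) = Σ_{T ⊆ [r], |T| = t} M_r([s], T)`. -/
def Nmat (r : ℕ) : Matrix (Fin (r + 1)) (Fin (r + 1)) ℝ :=
  fun s t => ∑ T ∈ Finset.univ.filter (fun T : Finset (Fin r) => T.card = (t : ℕ)),
    Mmat r (Finset.univ.filter (fun i : Fin r => (i : ℕ) < (s : ℕ))) T

/-- The lift `Φ : ℝ^(r+1) → ℝ^(𝒫([r]))`, `(Φ V)_T = V_{|T|}`. -/
def Phi (r : ℕ) (V : Fin (r + 1) → ℝ) : Finset (Fin r) → ℝ :=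
  fun T => V ⟨T.card, Nat.lt_succ_of_le (by simpa using Finset.card_le_univ T)⟩

/-! `M_r` is invariant under the action of the symmetric group on `[r]`, so for every layer
`{T : |T| = t}` the row sum `Σ_{|T| = t} M_r(S, T)` depends only on `|S|`, and equals
`N_r(|S|, t)`. Hence `M_r` maps vectors that are constant on layers to such vectors, acting on
them as `N_r` does: `M_r ∘ Φ = Φ ∘ N_r`. Since `Φ` is injective (read `V_s` off `(Φ V)_{[s]}`),
eigenvectors of `N_r` lift to eigenvectors of `M_r`. -/

open Finset Matrix

theorem sum_filter_card_eq_of_perm_invariant {α R : Type*} [Fintype α] [DecidableEq α]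
    [AddCommMonoid R] (A : Matrix (Finset α) (Finset α) R)
    (hA : ∀ (σ : Equiv.Perm α) S T, A (S.map σ.toEmbedding) (T.map σ.toEmbedding) = A S T)
    {S₁ S₂ : Finset α} (h : #S₁ = #S₂) (t : ℕ) :
    ∑ T with #T = t, A S₁ T = ∑ T with #T = t, A S₂ T := by
  obtain ⟨σ, rfl⟩ := Equiv.Perm.exists_map_finset_eq S₁ S₂ h
  exact Finset.sum_equiv σ.finsetCongr (by simp) (fun T _ => by simp [hA])

theorem Mmat_map_perm (r : ℕ) (σ : Equiv.Perm (Fin r)) (S T : Finset (Fin r)) :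
    Mmat r (S.map σ.toEmbedding) (T.map σ.toEmbedding) = Mmat r S T := by
  have hcompl (U : Finset (Fin r)) : (U.map σ.toEmbedding)ᶜ = Uᶜ.map σ.toEmbedding := by
    simp [compl_eq_univ_sdiff, Finset.map_sdiff]
  simp only [Mmat, hcompl, ← map_inter, card_map]

def layerIndex {r : ℕ} (T : Finset (Fin r)) : Fin (r + 1) :=
  ⟨#T, Nat.lt_succ_of_le (by simpa using card_le_univ T)⟩

theorem Phi_apply (r : ℕ) (V : Fin (r + 1) → ℝ) (T : Finset (Fin r)) :
    Phi r V T = V (layerIndex T) := rfl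

theorem layerIndex_eq_iff {r : ℕ} (T : Finset (Fin r)) (t : Fin (r + 1)) :
    layerIndex T = t ↔ #T = t := Fin.ext_iff

theorem card_initialSegment {r : ℕ} (s : Fin (r + 1)) : #{i : Fin r | (i : ℕ) < s} = s := by
  rw [Fin.card_filter_val_lt, min_eq_right (Nat.lt_succ_iff.1 s.2)]

theorem layerIndex_initialSegment {r : ℕ} (s : Fin (r + 1)) :
    layerIndex ({i : Fin r | (i : ℕ) < s} : Finset (Fin r)) = s :=
  (layerIndex_eq_iff _ _).2 (card_initialSegment s)

theorem Nmat_layerIndex (r : ℕ) (S : Finset (Fin r)) (t : Fin (r + 1)) :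
    Nmat r (layerIndex S) t = ∑ T with layerIndex T = t, Mmat r S T := by
  simp only [layerIndex_eq_iff]
  exact sum_filter_card_eq_of_perm_invariant _ (Mmat_map_perm r) (card_initialSegment _) t

theorem Mmat_mulVec_Phi (r : ℕ) (V : Fin (r + 1) → ℝ) :
    Mmat r *ᵥ Phi r V = Phi r (Nmat r *ᵥ V) := by
  funext S
  calc (Mmat r *ᵥ Phi r V) S
      = ∑ t, ∑ T with layerIndex T = t, Mmat r S T * V (layerIndex T) :=
        (sum_fiberwise univ layerIndex fun T => Mmat r S T * V (layerIndex T)).symm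
    _ = ∑ t, Nmat r (layerIndex S) t * V t := by
        refine sum_congr rfl fun t _ => ?_
        rw [Nmat_layerIndex, sum_mul]
        exact sum_congr rfl fun T hT => by rw [(mem_filter.1 hT).2]
    _ = Phi r (Nmat r *ᵥ V) S := rfl

theorem Phi_injective (r : ℕ) : Function.Injective (Phi r) := by
  intro V W h
  funext s
  simpa [Phi_apply, layerIndex_initialSegment] using
    congrFun h ({i : Fin r | (i : ℕ) < s} : Finset (Fin r))

theorem Phi_eigenvector_general (r : ℕ) (V : Fin (r + 1) → ℝ) (lam : ℝ)
    (hV : V ≠ 0) (hEig : (Nmat r).mulVec V = lam • V) :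
    (Mmat r).mulVec (Phi r V) = lam • Phi r V ∧ Phi r V ≠ 0 := by
  refine ⟨by rw [Mmat_mulVec_Phi, hEig]; rfl, fun h => hV (Phi_injective r ?_)⟩
  rw [h]
  rfl

/-- If `V` is an eigenvector of `N_r` with eigenvalue `λ`, then `Φ(V)` is an
eigenvector of `M_r` with eigenvalue `λ`. -/
theorem Phi_eigenvector (r : ℕ) (hr : 4 ≤ r) (V : Fin (r + 1) → ℝ) (lam : ℝ)
    (hV : V ≠ 0) (hEig : (Nmat r).mulVec V = lam • V) :
    (Mmat r).mulVec (Phi r V) = lam • Phi r V ∧ Phi r V ≠ 0 :=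
  Phi_eigenvector_general r V lam hV hEig
end

section
/- Let r ≥ 4 and let V ∈ ℝ^(𝒫([r])) be the vector defined by V_T = 1 if |T| = r−1, V_T = 2−r if |T| = r, and V_T = 0 if |T| ≤ r−2. Then M_r V = 0, i.e., V is a nonzero vector in the kernel of M_r. -/
lemma key_choose (n : ℕ) :
    (n : ℝ) * ((n - 1).choose 2 : ℕ) = ((n : ℝ) - 2) * (n.choose 2 : ℕ) := by
  match n with
  | 0 => norm_num
  | 1 => norm_num
  | (m+2) =>
    rw [show m + 2 - 1 = m + 1 from rfl, Nat.cast_choose_two, Nat.cast_choose_two]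
    push_cast
    ring

/-- For `r ≥ 4`, the vector `V` with `V_T = 1` if `|T| = r−1`,
`V_T = 2−r` if `|T| = r`, and `V_T = 0` if `|T| ≤ r−2`, is a nonzero vector in the
kernel of `M_r`. -/
theorem familyA_kernel (r : ℕ) (hr : 4 ≤ r) (V : Finset (Fin r) → ℝ)
    (hV : ∀ T : Finset (Fin r),
      V T = if T.card = r - 1 then 1 else if T.card = r then 2 - (r : ℝ) else 0) :
    (Mmat r).mulVec V = 0 ∧ V ≠ 0 := by
  constructor
  · funext S
    have hsr : S.card ≤ r := by
      simpa using Finset.card_le_card (Finset.subset_univ S)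
    show ∑ T : Finset (Fin r), Mmat r S T * V T = 0
    have hsplit : ∀ T : Finset (Fin r), Mmat r S T * V T =
        (if T.card = r - 1 then Mmat r S T else 0) +
        (if T = Finset.univ then (2 - (r : ℝ)) * Mmat r S T else 0) := by
      intro T
      rw [hV T]
      by_cases h1 : T.card = r - 1
      · have h2 : T ≠ Finset.univ := by
          intro h; subst h; rw [Finset.card_univ, Fintype.card_fin] at h1; omega
        simp [h1, h2]
      · by_cases h2 : T.card = r
        · have hT : T = Finset.univ := by
            rw [← Finset.card_eq_iff_eq_univ, Fintype.card_fin]; exact h2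
          have hne : r ≠ r - 1 := by omega
          simp [h1, h2, hT, hne, mul_comm]
        · have h3 : T ≠ Finset.univ := by
            intro h; subst h; rw [Finset.card_univ, Fintype.card_fin] at h2; omega
          simp [h1, h2, h3]
    rw [Finset.sum_congr rfl (fun T _ => hsplit T), Finset.sum_add_distrib]
    -- second sum
    rw [Finset.sum_ite_eq' Finset.univ Finset.univ
      (fun T => (2 - (r : ℝ)) * Mmat r S T)]
    simp only [Finset.mem_univ, if_true]
    -- the filtered set is the image of singleton-complements
    have himg : (Finset.univ.filter (fun T : Finset (Fin r) => T.card = r - 1)) =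
        Finset.image (fun i : Fin r => ({i} : Finset (Fin r))ᶜ) Finset.univ := by
      ext T
      simp only [Finset.mem_filter, Finset.mem_univ, true_and, Finset.mem_image]
      constructor
      · intro hT
        have hc : Tᶜ.card = 1 := by
          rw [Finset.card_compl, Fintype.card_fin, hT]; omega
        obtain ⟨i, hi⟩ := Finset.card_eq_one.mp hc
        exact ⟨i, by rw [← hi, compl_compl]⟩
      · rintro ⟨i, rfl⟩
        rw [Finset.card_compl, Finset.card_singleton, Fintype.card_fin]
    have hinj : ∀ x ∈ (Finset.univ : Finset (Fin r)), ∀ y ∈ (Finset.univ : Finset (Fin r)),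
        ({x} : Finset (Fin r))ᶜ = ({y} : Finset (Fin r))ᶜ → x = y := by
      intro x _ y _ h
      have := compl_injective h
      simpa using this
    rw [← Finset.sum_filter, himg, Finset.sum_image hinj]
    -- compute M S {i}ᶜ
    have hM : ∀ i : Fin r, Mmat r S ({i} : Finset (Fin r))ᶜ =
        if i ∈ S then (((S.card - 1).choose 2 : ℕ) : ℝ) else ((S.card.choose 2 : ℕ) : ℝ) := by
      intro i
      unfold Mmat
      have h1 : S ∩ ({i} : Finset (Fin r))ᶜ = S.erase i := by
        ext x; simp [Finset.mem_erase, and_comm]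
      have h2 : (Sᶜ ∩ ({i} : Finset (Fin r))ᶜᶜ).card ≤ 1 := by
        rw [compl_compl]
        calc (Sᶜ ∩ {i}).card ≤ ({i} : Finset (Fin r)).card :=
              Finset.card_le_card (Finset.inter_subset_right)
          _ = 1 := Finset.card_singleton i
      have h3 : (Sᶜ ∩ ({i} : Finset (Fin r))ᶜᶜ).card.choose 2 = 0 :=
        Nat.choose_eq_zero_of_lt (by omega)
      rw [h1, h3]
      by_cases hi : i ∈ S
      · rw [Finset.card_erase_of_mem hi]
        simp [hi]
      · rw [Finset.erase_eq_of_notMem hi]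
        simp [hi]
    rw [Finset.sum_congr rfl (fun i _ => hM i), Finset.sum_ite, Finset.sum_const,
      Finset.sum_const]
    have hf1 : (Finset.univ.filter (fun i : Fin r => i ∈ S)) = S := by
      ext x; simp
    have hf2 : (Finset.univ.filter (fun i : Fin r => ¬ i ∈ S)) = Sᶜ := by
      ext x; simp
    rw [hf1, hf2, Finset.card_compl, Fintype.card_fin]
    -- compute M S univ
    have hMu : Mmat r S Finset.univ = ((S.card.choose 2 : ℕ) : ℝ) := by
      unfold Mmat
      simp
    rw [hMu]
    have hk := key_choose S.card
    rw [nsmul_eq_mul, nsmul_eq_mul]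
    push_cast [Nat.cast_sub hsr]
    rw [hk]
    ring
  · intro h
    have h1 : V Finset.univ = 0 := by rw [h]; rfl
    rw [hV Finset.univ, Finset.card_univ, Fintype.card_fin] at h1
    have hne : r ≠ r - 1 := by omega
    rw [if_neg hne, if_pos rfl] at h1
    have : (r : ℝ) = 2 := by linarith
    have : r = 2 := by exact_mod_cast this
    omega
end

section
/- Let r ≥ 4 and let V ∈ ℝ^(𝒫([r])) be the vector defined by V_T = C(|T|, 2) + C(r−|T|, 2) for each T ⊆ [r]. Then V is an eigenvector of M_r with eigenvalue 2^(r−4)·(r² − r + 2). -/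
open Finset

lemma choose_two_real (n : ℕ) : ((n.choose 2 : ℕ) : ℝ) = (n:ℝ) * ((n:ℝ) - 1) / 2 := by
  induction n with
  | zero => norm_num
  | succ k ih =>
    rw [Nat.choose_succ_succ, Nat.choose_one_right]
    push_cast
    push_cast at ih
    rw [ih]; ring

lemma moments {α : Type*} [DecidableEq α] (X : Finset α) :
    (∑ U ∈ X.powerset, (1:ℝ)) = 2 ^ X.card ∧
    (∑ U ∈ X.powerset, (U.card : ℝ)) = 2 ^ X.card * ((X.card:ℝ) / 2) ∧
    (∑ U ∈ X.powerset, (U.card : ℝ)^2) = 2 ^ X.card * (((X.card:ℝ)^2 + X.card) / 4) ∧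
    (∑ U ∈ X.powerset, (U.card : ℝ)^3) = 2 ^ X.card * (((X.card:ℝ)^3 + 3*(X.card:ℝ)^2) / 8) ∧
    (∑ U ∈ X.powerset, (U.card : ℝ)^4) = 2 ^ X.card *
      (((X.card:ℝ)^4 + 6*(X.card:ℝ)^3 + 3*(X.card:ℝ)^2 - 2*(X.card:ℝ)) / 16) := by
  induction X using Finset.induction_on with
  | empty => norm_num
  | @insert a X ha ih =>
    obtain ⟨i0, i1, i2, i3, i4⟩ := ih
    have hcard : ∀ U ∈ X.powerset, ((insert a U).card : ℝ) = (U.card : ℝ) + 1 := by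
      intro U hU
      rw [Finset.card_insert_of_notMem (fun h => ha (Finset.mem_powerset.mp hU h))]
      push_cast; ring
    have hins : ((insert a X).card : ℕ) = X.card + 1 := Finset.card_insert_of_notMem ha
    have e : ∀ k : ℕ, ∑ U ∈ X.powerset, ((insert a U).card : ℝ)^k
        = ∑ U ∈ X.powerset, ((U.card:ℝ)+1)^k :=
      fun k => Finset.sum_congr rfl (fun U hU => by rw [hcard U hU])
    refine ⟨?_, ?_, ?_, ?_, ?_⟩
    · rw [Finset.sum_powerset_insert ha, hins, i0]; ring
    · rw [Finset.sum_powerset_insert ha, hins]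
      rw [Finset.sum_congr rfl (fun U hU => hcard U hU)]
      rw [show (∑ U ∈ X.powerset, ((U.card:ℝ)+1)) = (∑ U ∈ X.powerset, (U.card:ℝ))
            + ∑ U ∈ X.powerset, (1:ℝ) from Finset.sum_add_distrib]
      rw [i0, i1]; push_cast; ring
    · rw [Finset.sum_powerset_insert ha, hins, e 2]
      rw [show (∑ U ∈ X.powerset, ((U.card:ℝ)+1)^2)
            = (∑ U ∈ X.powerset, (U.card:ℝ)^2) + 2*(∑ U ∈ X.powerset, (U.card:ℝ))
              + ∑ U ∈ X.powerset, (1:ℝ) by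
          rw [Finset.mul_sum, ← Finset.sum_add_distrib, ← Finset.sum_add_distrib]
          exact Finset.sum_congr rfl (fun U _ => by ring)]
      rw [i0, i1, i2]; push_cast; ring
    · rw [Finset.sum_powerset_insert ha, hins, e 3]
      rw [show (∑ U ∈ X.powerset, ((U.card:ℝ)+1)^3)
            = (∑ U ∈ X.powerset, (U.card:ℝ)^3) + 3*(∑ U ∈ X.powerset, (U.card:ℝ)^2)
              + 3*(∑ U ∈ X.powerset, (U.card:ℝ)) + ∑ U ∈ X.powerset, (1:ℝ) by
          rw [Finset.mul_sum, Finset.mul_sum, ← Finset.sum_add_distrib,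
            ← Finset.sum_add_distrib, ← Finset.sum_add_distrib]
          exact Finset.sum_congr rfl (fun U _ => by ring)]
      rw [i0, i1, i2, i3]; push_cast; ring
    · rw [Finset.sum_powerset_insert ha, hins, e 4]
      rw [show (∑ U ∈ X.powerset, ((U.card:ℝ)+1)^4)
            = (∑ U ∈ X.powerset, (U.card:ℝ)^4) + 4*(∑ U ∈ X.powerset, (U.card:ℝ)^3)
              + 6*(∑ U ∈ X.powerset, (U.card:ℝ)^2) + 4*(∑ U ∈ X.powerset, (U.card:ℝ))
              + ∑ U ∈ X.powerset, (1:ℝ) by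
          rw [Finset.mul_sum, Finset.mul_sum, Finset.mul_sum, ← Finset.sum_add_distrib,
            ← Finset.sum_add_distrib, ← Finset.sum_add_distrib, ← Finset.sum_add_distrib]
          exact Finset.sum_congr rfl (fun U _ => by ring)]
      rw [i0, i1, i2, i3, i4]; push_cast; ring

lemma poly_sum {α : Type*} [DecidableEq α] (X : Finset α) (c0 c1 c2 c3 c4 : ℝ) :
    ∑ W ∈ X.powerset, (c0 + c1*(W.card:ℝ) + c2*(W.card:ℝ)^2 + c3*(W.card:ℝ)^3 + c4*(W.card:ℝ)^4)
    = 2 ^ X.card * (c0 + c1*((X.card:ℝ)/2) + c2*(((X.card:ℝ)^2 + X.card)/4)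
        + c3*(((X.card:ℝ)^3 + 3*(X.card:ℝ)^2)/8)
        + c4*(((X.card:ℝ)^4 + 6*(X.card:ℝ)^3 + 3*(X.card:ℝ)^2 - 2*(X.card:ℝ))/16)) := by
  obtain ⟨m0, m1, m2, m3, m4⟩ := moments X
  rw [show (∑ W ∈ X.powerset, (c0 + c1*(W.card:ℝ) + c2*(W.card:ℝ)^2 + c3*(W.card:ℝ)^3
        + c4*(W.card:ℝ)^4))
      = c0 * (∑ W ∈ X.powerset, (1:ℝ)) + c1*(∑ W ∈ X.powerset, (W.card:ℝ))
        + c2*(∑ W ∈ X.powerset, (W.card:ℝ)^2) + c3*(∑ W ∈ X.powerset, (W.card:ℝ)^3)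
        + c4*(∑ W ∈ X.powerset, (W.card:ℝ)^4) by
    rw [Finset.mul_sum, Finset.mul_sum, Finset.mul_sum, Finset.mul_sum, Finset.mul_sum,
      ← Finset.sum_add_distrib, ← Finset.sum_add_distrib, ← Finset.sum_add_distrib,
      ← Finset.sum_add_distrib]
    exact Finset.sum_congr rfl (fun U _ => by ring)]
  rw [m0, m1, m2, m3, m4]; ring

noncomputable def Gf0 (sR mR a : ℝ) : ℝ := (1/4:ℝ)*mR^2 + (-1/2:ℝ)*mR^3 + (1/4:ℝ)*mR^4 + (1/4:ℝ)*sR*mR + (-3/4:ℝ)*sR*mR^2 + (1/2:ℝ)*sR*mR^3 + (-1/4:ℝ)*sR^2*mR + (1/4:ℝ)*sR^2*mR^2 + (1/4:ℝ)*a*mR + (1/4:ℝ)*a*mR^2 + (-1/2:ℝ)*a*mR^3 + (1/4:ℝ)*a*sR + (-1/2:ℝ)*a*sR*mR^2 + (-1/4:ℝ)*a*sR^2 + (-1/4:ℝ)*a^2*mR + (3/4:ℝ)*a^2*mR^2 + (1/4:ℝ)*a^2*sR + (1/2:ℝ)*a^2*sR*mR + (1/4:ℝ)*a^2*sR^2 +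 (-1/2:ℝ)*a^3 + (-1/2:ℝ)*a^3*mR + (-1/2:ℝ)*a^3*sR + (1/2:ℝ)*a^4
noncomputable def Gf1 (sR mR a : ℝ) : ℝ := (-1/4:ℝ)*mR + (5/4:ℝ)*mR^2 + (-1:ℝ)*mR^3 + (-1/4:ℝ)*sR + (3/2:ℝ)*sR*mR + (-3/2:ℝ)*sR*mR^2 + (1/4:ℝ)*sR^2 + (-1/2:ℝ)*sR^2*mR + (-1:ℝ)*a*mR + (2:ℝ)*a*mR^2 + (1:ℝ)*a*sR*mR + (-1/2:ℝ)*a^2 + (-3/2:ℝ)*a^2*mR + (-1/2:ℝ)*a^2*sR + (1:ℝ)*a^3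
noncomputable def Gf2 (sR mR a : ℝ) : ℝ := (-5/4:ℝ)*mR + (7/4:ℝ)*mR^2 + (-3/4:ℝ)*sR + (3/2:ℝ)*sR*mR + (1/4:ℝ)*sR^2 + (1/2:ℝ)*a + (-5/2:ℝ)*a*mR + (-1/2:ℝ)*a*sR + (1:ℝ)*a^2
noncomputable def Gf3 (sR mR a : ℝ) : ℝ := (1/2:ℝ) + (-3/2:ℝ)*mR + (-1/2:ℝ)*sR + (1:ℝ)*a
noncomputable def Gf4 (sR mR a : ℝ) : ℝ := (1/2:ℝ)
noncomputable def Hf0 (sR mR : ℝ) : ℝ := (-1/16:ℝ)*mR + (3/32:ℝ)*mR^2 + (-1/16:ℝ)*mR^3 + (1/32:ℝ)*mR^4 + (-1/16:ℝ)*sR*mR + (1/16:ℝ)*sR*mR^3 + (-1/16:ℝ)*sR^2*mR + (1/16:ℝ)*sR^2*mR^2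
noncomputable def Hf1 (sR mR : ℝ) : ℝ := (3/8:ℝ)*mR + (-3/8:ℝ)*mR^2 + (1/4:ℝ)*sR + (-1/8:ℝ)*sR*mR + (-1/8:ℝ)*sR*mR^2 + (-1/4:ℝ)*sR^2
noncomputable def Hf2 (sR mR : ℝ) : ℝ := (-1/4:ℝ)*mR + (1/4:ℝ)*mR^2 + (1/4:ℝ)*sR + (1/4:ℝ)*sR*mR + (1/4:ℝ)*sR^2
noncomputable def Hf3 (sR mR : ℝ) : ℝ := (-1/2:ℝ) + (-1/2:ℝ)*sR
noncomputable def Hf4 (sR mR : ℝ) : ℝ := (1/2:ℝ)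

lemma sum_split {r : ℕ} (S : Finset (Fin r)) (f : Finset (Fin r) → ℝ) :
    ∑ T : Finset (Fin r), f T
      = ∑ U ∈ S.powerset, ∑ W ∈ Sᶜ.powerset, f (U ∪ W) := by
  rw [← Finset.sum_product']
  refine (Finset.sum_nbij' (i := fun p => p.1 ∪ p.2) (j := fun T => (T ∩ S, T ∩ Sᶜ))
    ?_ ?_ ?_ ?_ ?_).symm
  · intro p _; exact Finset.mem_univ _
  · intro T _
    simp only [Finset.mem_product, Finset.mem_powerset]
    exact ⟨Finset.inter_subset_right, Finset.inter_subset_right⟩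
  · rintro ⟨U, W⟩ hp
    simp only [Finset.mem_product, Finset.mem_powerset] at hp
    obtain ⟨hU, hW⟩ := hp
    have h1 : (U ∪ W) ∩ S = U := by
      ext x
      simp only [Finset.mem_inter, Finset.mem_union]
      constructor
      · rintro ⟨h1 | h1, h2⟩
        · exact h1
        · exact absurd h2 (Finset.mem_compl.mp (hW h1))
      · exact fun h => ⟨Or.inl h, hU h⟩
    have h2 : (U ∪ W) ∩ Sᶜ = W := by
      ext x
      simp only [Finset.mem_inter, Finset.mem_union, Finset.mem_compl]
      constructor
      · rintro ⟨h1 | h1, h2⟩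
        · exact absurd (hU h1) h2
        · exact h1
      · exact fun h => ⟨Or.inr h, Finset.mem_compl.mp (hW h)⟩
    simp [h1, h2]
  · intro T _
    simp only
    rw [← Finset.inter_union_distrib_left, Finset.union_compl, Finset.inter_univ]
  · intro p _; rfl

/-- For `r ≥ 4`, the vector `V` with `V_T = C(|T|,2) + C(r−|T|,2)` is an
eigenvector of `M_r` with eigenvalue `2^(r−4)·(r² − r + 2)`. -/
theorem familyB_eigenvector (r : ℕ) (hr : 4 ≤ r) (V : Finset (Fin r) → ℝ)
    (hV : ∀ T : Finset (Fin r),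
      V T = (T.card.choose 2 : ℝ) + ((r - T.card).choose 2 : ℝ)) :
    (Mmat r).mulVec V = ((2 : ℝ) ^ (r - 4) * ((r : ℝ) ^ 2 - (r : ℝ) + 2)) • V ∧ V ≠ 0 := by
  have hVne : V ≠ 0 := by
    intro h0
    have := hV ∅
    rw [h0] at this
    simp only [Pi.zero_apply, Finset.card_empty, Nat.choose_zero_right, Nat.sub_zero] at this
    have hpos : 0 < r.choose 2 := Nat.choose_pos (by omega)
    have : ((0:ℕ).choose 2 : ℝ) + (r.choose 2 : ℝ) > 0 := by
      have : (0:ℝ) < (r.choose 2 : ℝ) := by exact_mod_cast hpos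
      simpa using this
    linarith [this.le, ‹(0:ℝ) = ((0:ℕ).choose 2 : ℝ) + (r.choose 2 : ℝ)›]
  refine ⟨?_, hVne⟩
  funext S
  have hsm : S.card + Sᶜ.card = r := by
    rw [Finset.card_add_card_compl, Fintype.card_fin]
  have hrR : (r:ℝ) = (S.card:ℝ) + (Sᶜ.card:ℝ) := by exact_mod_cast hsm.symm
  have h2pow : (2:ℝ)^(r-4) = 2^S.card * 2^Sᶜ.card / 16 := by
    have h16 : (2:ℝ)^(r-4) * 16 = 2^S.card * 2^Sᶜ.card := by
      rw [← pow_add, hsm]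
      rw [show ((16:ℝ) = 2^4) by norm_num, ← pow_add, Nat.sub_add_cancel hr]
    linarith
  show ∑ T : Finset (Fin r), Mmat r S T * V T = _
  have key : ∀ U ∈ S.powerset, ∀ W ∈ Sᶜ.powerset,
      Mmat r S (U ∪ W) * V (U ∪ W)
        = Gf0 (S.card:ℝ) (Sᶜ.card:ℝ) (U.card:ℝ)
          + Gf1 (S.card:ℝ) (Sᶜ.card:ℝ) (U.card:ℝ) * (W.card:ℝ)
          + Gf2 (S.card:ℝ) (Sᶜ.card:ℝ) (U.card:ℝ) * (W.card:ℝ)^2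
          + Gf3 (S.card:ℝ) (Sᶜ.card:ℝ) (U.card:ℝ) * (W.card:ℝ)^3
          + Gf4 (S.card:ℝ) (Sᶜ.card:ℝ) (U.card:ℝ) * (W.card:ℝ)^4 := by
    intro U hU W hW
    have hUS : U ⊆ S := Finset.mem_powerset.mp hU
    have hWS : W ⊆ Sᶜ := Finset.mem_powerset.mp hW
    have h1 : S ∩ (U ∪ W) = U := by
      ext x
      simp only [Finset.mem_inter, Finset.mem_union]
      constructor
      · rintro ⟨h2, h1 | h1⟩
        · exact h1
        · exact absurd h2 (Finset.mem_compl.mp (hWS h1))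
      · exact fun h => ⟨hUS h, Or.inl h⟩
    have h2 : Sᶜ ∩ (U ∪ W)ᶜ = Sᶜ \ W := by
      ext x
      simp only [Finset.mem_inter, Finset.mem_compl, Finset.mem_sdiff, Finset.mem_union,
        not_or]
      constructor
      · rintro ⟨ha, _, hc⟩; exact ⟨ha, hc⟩
      · rintro ⟨ha, hc⟩; exact ⟨ha, fun h => ha (hUS h), hc⟩
    have hdisj : Disjoint U W :=
      Finset.disjoint_left.mpr fun {x} hxU hxW =>
        (Finset.mem_compl.mp (hWS hxW)) (hUS hxU)
    have hcard2 : (U ∪ W).card = U.card + W.card := Finset.card_union_of_disjoint hdisj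
    have hb : W.card ≤ Sᶜ.card := Finset.card_le_card hWS
    have hab : U.card + W.card ≤ r := by
      have := Finset.card_le_card hUS; omega
    have hcard1 : (Sᶜ \ W).card = Sᶜ.card - W.card := Finset.card_sdiff_of_subset hWS
    show (((S ∩ (U ∪ W)).card.choose 2 : ℝ) + ((Sᶜ ∩ (U ∪ W)ᶜ).card.choose 2 : ℝ)) * _ = _
    rw [hV, h1, h2, hcard1, hcard2]
    simp only [choose_two_real]
    rw [Nat.cast_sub hb, Nat.cast_sub hab]
    rw [hrR]
    simp only [Gf0, Gf1, Gf2, Gf3, Gf4]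
    push_cast
    ring
  rw [sum_split S (fun T => Mmat r S T * V T)]
  rw [Finset.sum_congr rfl (fun U hU => by
    rw [Finset.sum_congr rfl (fun W hW => key U hU W hW),
      poly_sum Sᶜ (Gf0 (S.card:ℝ) (Sᶜ.card:ℝ) (U.card:ℝ)) (Gf1 (S.card:ℝ) (Sᶜ.card:ℝ) (U.card:ℝ))
        (Gf2 (S.card:ℝ) (Sᶜ.card:ℝ) (U.card:ℝ)) (Gf3 (S.card:ℝ) (Sᶜ.card:ℝ) (U.card:ℝ))
        (Gf4 (S.card:ℝ) (Sᶜ.card:ℝ) (U.card:ℝ))])]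
  rw [Finset.sum_congr rfl (fun U _ => by
    rw [show (2:ℝ) ^ Sᶜ.card * (Gf0 (S.card:ℝ) (Sᶜ.card:ℝ) (U.card:ℝ)
          + Gf1 (S.card:ℝ) (Sᶜ.card:ℝ) (U.card:ℝ) * ((Sᶜ.card:ℝ)/2)
          + Gf2 (S.card:ℝ) (Sᶜ.card:ℝ) (U.card:ℝ) * (((Sᶜ.card:ℝ)^2 + Sᶜ.card)/4)
          + Gf3 (S.card:ℝ) (Sᶜ.card:ℝ) (U.card:ℝ) * (((Sᶜ.card:ℝ)^3 + 3*(Sᶜ.card:ℝ)^2)/8)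
          + Gf4 (S.card:ℝ) (Sᶜ.card:ℝ) (U.card:ℝ)
            * (((Sᶜ.card:ℝ)^4 + 6*(Sᶜ.card:ℝ)^3 + 3*(Sᶜ.card:ℝ)^2 - 2*(Sᶜ.card:ℝ))/16))
        = (2:ℝ) ^ Sᶜ.card * (Hf0 (S.card:ℝ) (Sᶜ.card:ℝ)
          + Hf1 (S.card:ℝ) (Sᶜ.card:ℝ) * (U.card:ℝ)
          + Hf2 (S.card:ℝ) (Sᶜ.card:ℝ) * (U.card:ℝ)^2
          + Hf3 (S.card:ℝ) (Sᶜ.card:ℝ) * (U.card:ℝ)^3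
          + Hf4 (S.card:ℝ) (Sᶜ.card:ℝ) * (U.card:ℝ)^4) by
      simp only [Gf0, Gf1, Gf2, Gf3, Gf4, Hf0, Hf1, Hf2, Hf3, Hf4]; ring])]
  rw [← Finset.mul_sum]
  rw [poly_sum S (Hf0 (S.card:ℝ) (Sᶜ.card:ℝ)) (Hf1 (S.card:ℝ) (Sᶜ.card:ℝ))
    (Hf2 (S.card:ℝ) (Sᶜ.card:ℝ)) (Hf3 (S.card:ℝ) (Sᶜ.card:ℝ)) (Hf4 (S.card:ℝ) (Sᶜ.card:ℝ))]
  have hVS : V S = ((S.card:ℝ) * ((S.card:ℝ) - 1) / 2) + ((Sᶜ.card:ℝ) * ((Sᶜ.card:ℝ) - 1) / 2) := by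
    rw [hV S]
    have : r - S.card = Sᶜ.card := by omega
    rw [this]
    simp only [choose_two_real]
  rw [Pi.smul_apply, smul_eq_mul, hVS, hrR, h2pow]
  simp only [Hf0, Hf1, Hf2, Hf3, Hf4]
  ring
end

section
/- Let r ≥ 4 and let V ∈ ℝ^(𝒫([r])) be the vector defined by V_T = C(|T|, 2) − C(r−|T|, 2) for each T ⊆ [r]. Then V is an eigenvector of M_r with eigenvalue 2^(r−2)·(r − 1). -/
open Finset in
private lemma familyC_sum_superset_eq {α : Type*} [Fintype α] [DecidableEq α]
    (A : Finset α) (f : Finset α → ℝ) :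
    ∑ T : Finset α, (if A ⊆ T then f T else 0) = ∑ B ∈ Aᶜ.powerset, f (A ∪ B) := by
  rw [← Finset.sum_filter]
  refine Finset.sum_nbij' (fun T => T \ A) (fun B => A ∪ B) ?_ ?_ ?_ ?_ ?_
  · intro T hT
    simp only [mem_filter, mem_univ, true_and] at hT
    simp only [mem_powerset]
    intro x hx
    simp only [mem_sdiff] at hx
    simp [hx.2]
  · intro B hB
    simp only [mem_powerset] at hB
    simp
  · intro T hT
    simp only [mem_filter, mem_univ, true_and] at hT
    exact Finset.union_sdiff_of_subset hT
  · intro B hB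
    simp only [mem_powerset] at hB
    apply Finset.union_sdiff_cancel_left
    rw [Finset.disjoint_left]
    intro x hxA hxB
    have := hB hxB
    simp at this
    exact this hxA
  · intro T hT
    simp only [mem_filter, mem_univ, true_and] at hT
    rw [Finset.union_sdiff_of_subset hT]

open Finset in
private lemma familyC_two_mul_sum_card {α : Type*} [DecidableEq α] (u : Finset α) :
    2 * ∑ B ∈ u.powerset, (B.card : ℝ) = u.card * 2 ^ u.card := by
  have h1 : ∑ B ∈ u.powerset, (B.card : ℝ) = ∑ B ∈ u.powerset, ((u \ B).card : ℝ) := by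
    refine Finset.sum_nbij' (fun B => u \ B) (fun B => u \ B) ?_ ?_ ?_ ?_ ?_ <;>
      simp (config := {contextual := true}) [Finset.sdiff_sdiff_eq_self, Finset.mem_powerset]
  have h2 : ∑ B ∈ u.powerset, ((B.card : ℝ) + ((u \ B).card : ℝ)) = u.card * 2 ^ u.card := by
    have : ∀ B ∈ u.powerset, (B.card : ℝ) + ((u \ B).card : ℝ) = u.card := by
      intro B hB
      rw [mem_powerset] at hB
      rw [Finset.card_sdiff_of_subset hB]
      have := Finset.card_le_card hB
      push_cast [this]
      ring
    rw [Finset.sum_congr rfl this, Finset.sum_const, card_powerset]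
    push_cast
    ring
  rw [two_mul]
  nth_rewrite 2 [h1]
  rw [← Finset.sum_add_distrib]
  exact h2

open Finset in
private lemma familyC_sum_indicator_W {α : Type*} [Fintype α] [DecidableEq α] (A : Finset α) :
    ∑ T : Finset α, (if A ⊆ T then (2 * (T.card : ℝ) - (Fintype.card α : ℝ)) else 0)
      = A.card * 2 ^ Aᶜ.card := by
  rw [familyC_sum_superset_eq A (fun T => 2 * (T.card : ℝ) - (Fintype.card α : ℝ))]
  have hdisj : ∀ B ∈ Aᶜ.powerset, ((A ∪ B).card : ℝ) = A.card + B.card := by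
    intro B hB
    rw [mem_powerset] at hB
    rw [Finset.card_union_of_disjoint]
    · push_cast; ring
    · rw [Finset.disjoint_left]
      intro x hxA hxB
      have := hB hxB
      simp at this; exact this hxA
  have hsum : ∑ B ∈ Aᶜ.powerset, (2 * ((A ∪ B).card : ℝ) - (Fintype.card α : ℝ))
      = ∑ B ∈ Aᶜ.powerset, (2 * ((A.card : ℝ) + B.card) - (Fintype.card α : ℝ)) := by
    apply Finset.sum_congr rfl
    intro B hB; rw [hdisj B hB]
  rw [hsum]
  have hcard : (Fintype.card α : ℝ) = A.card + Aᶜ.card := by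
    rw [← Finset.card_add_card_compl A]; push_cast; ring
  have h2 := familyC_two_mul_sum_card (Aᶜ : Finset α)
  have hre : ∀ B : Finset α, 2 * ((A.card : ℝ) + B.card) - (Fintype.card α : ℝ)
      = (2 * A.card - Fintype.card α) + 2 * B.card := fun B => by ring
  simp only [hre]
  rw [Finset.sum_add_distrib, Finset.sum_const, card_powerset, ← Finset.mul_sum, h2, hcard]
  push_cast
  ring

open Finset in
private lemma familyC_choose_two_eq_sum {α : Type*} [Fintype α] [DecidableEq α] (X : Finset α) :
    ((X.card.choose 2 : ℕ) : ℝ)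
      = ∑ p ∈ (univ : Finset α).powersetCard 2, (if p ⊆ X then (1 : ℝ) else 0) := by
  rw [Finset.sum_boole]
  congr 1
  rw [← Finset.card_powersetCard]
  congr 1
  ext p
  simp only [mem_filter, mem_powersetCard, subset_univ, true_and]
  tauto

open Finset in
private lemma familyC_key_sum {α : Type*} [Fintype α] [DecidableEq α] (S : Finset α) :
    ∑ T : Finset α, ((S ∩ T).card.choose 2 : ℝ) * (2 * (T.card : ℝ) - (Fintype.card α : ℝ))
      = (S.card.choose 2 : ℝ) * (2 * 2 ^ (Fintype.card α - 2)) := by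
  have step1 : ∀ T : Finset α,
      ((S ∩ T).card.choose 2 : ℝ) * (2 * (T.card : ℝ) - (Fintype.card α : ℝ))
      = ∑ p ∈ (univ : Finset α).powersetCard 2,
          (if p ⊆ S then (if p ⊆ T then (2 * (T.card : ℝ) - (Fintype.card α : ℝ)) else 0) else 0) := by
    intro T
    rw [familyC_choose_two_eq_sum (S ∩ T), Finset.sum_mul]
    apply Finset.sum_congr rfl
    intro p _
    rw [ite_mul, one_mul, zero_mul]
    by_cases h : p ⊆ S ∩ T
    · rw [if_pos h]
      rw [Finset.subset_inter_iff] at h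
      rw [if_pos h.1, if_pos h.2]
    · rw [if_neg h]
      rw [Finset.subset_inter_iff] at h
      split_ifs with h1 h2
      · exact absurd ⟨h1, h2⟩ h
      · rfl
      · rfl
  simp only [step1]
  rw [Finset.sum_comm]
  have step2 : ∀ p ∈ (univ : Finset α).powersetCard 2,
      (∑ T : Finset α,
        (if p ⊆ S then (if p ⊆ T then (2 * (T.card : ℝ) - (Fintype.card α : ℝ)) else 0) else 0))
      = if p ⊆ S then (2 * 2 ^ (Fintype.card α - 2) : ℝ) else 0 := by
    intro p hp
    rw [mem_powersetCard] at hp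
    by_cases hpS : p ⊆ S
    · simp only [hpS, if_true]
      rw [familyC_sum_indicator_W p, Finset.card_compl, hp.2]
      norm_num
    · simp [hpS]
  rw [Finset.sum_congr rfl step2, Finset.sum_ite, Finset.sum_const, Finset.sum_const]
  have hfil : Finset.filter (· ⊆ S) ((univ : Finset α).powersetCard 2) = S.powersetCard 2 := by
    ext p
    simp only [mem_filter, mem_powersetCard, subset_univ, true_and]
    tauto
  rw [hfil, Finset.card_powersetCard]
  simp [mul_comm]

open Finset in
private lemma familyC_W_compl {α : Type*} [Fintype α] [DecidableEq α] (T : Finset α) :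
    2 * ((Tᶜ : Finset α).card : ℝ) - (Fintype.card α : ℝ)
      = -(2 * (T.card : ℝ) - (Fintype.card α : ℝ)) := by
  rw [Finset.card_compl, Nat.cast_sub (Finset.card_le_univ T)]
  ring

open Finset in
private lemma familyC_key_sum_compl {α : Type*} [Fintype α] [DecidableEq α] (S : Finset α) :
    ∑ T : Finset α, ((Sᶜ ∩ Tᶜ).card.choose 2 : ℝ) * (2 * (T.card : ℝ) - (Fintype.card α : ℝ))
      = -(((Sᶜ : Finset α).card.choose 2 : ℝ) * (2 * 2 ^ (Fintype.card α - 2))) := by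
  have hbij : Function.Bijective (fun T : Finset α => Tᶜ) :=
    Function.Involutive.bijective (fun T => compl_compl T)
  have h := Fintype.sum_bijective (fun T : Finset α => Tᶜ) hbij
      (fun T : Finset α => ((Sᶜ ∩ Tᶜ).card.choose 2 : ℝ)
        * (2 * ((Tᶜ : Finset α).card : ℝ) - (Fintype.card α : ℝ)))
      (fun U : Finset α => ((Sᶜ ∩ U).card.choose 2 : ℝ)
        * (2 * (U.card : ℝ) - (Fintype.card α : ℝ)))
      (fun T => rfl)
  rw [familyC_key_sum Sᶜ] at h
  rw [← h]
  simp only [familyC_W_compl]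
  rw [← Finset.sum_neg_distrib]
  apply Finset.sum_congr rfl
  intro T _
  ring

/-- For `r ≥ 4`, the vector `V` with `V_T = C(|T|,2) − C(r−|T|,2)` is an
eigenvector of `M_r` with eigenvalue `2^(r−2)·(r − 1)`. -/
theorem familyC_eigenvector (r : ℕ) (hr : 4 ≤ r) (V : Finset (Fin r) → ℝ)
    (hV : ∀ T : Finset (Fin r),
      V T = (T.card.choose 2 : ℝ) - ((r - T.card).choose 2 : ℝ)) :
    (Mmat r).mulVec V = ((2 : ℝ) ^ (r - 2) * ((r : ℝ) - 1)) • V ∧ V ≠ 0 := by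
  have hrcard : Fintype.card (Fin r) = r := Fintype.card_fin r
  have hVW : ∀ T : Finset (Fin r), V T = (((r : ℝ) - 1) / 2) * (2 * T.card - r) := by
    intro T
    have ht : T.card ≤ r := by
      have := Finset.card_le_univ T
      rwa [hrcard] at this
    rw [hV T, Nat.cast_choose_two, Nat.cast_choose_two, Nat.cast_sub ht]
    ring
  constructor
  · funext S
    have hS : S.card ≤ r := by
      have := Finset.card_le_univ S
      rwa [hrcard] at this
    have hcomplS : (Sᶜ : Finset (Fin r)).card = r - S.card := by
      rw [Finset.card_compl, hrcard]
    have expand : ∀ T : Finset (Fin r),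
        (((S ∩ T).card.choose 2 : ℝ) + ((Sᶜ ∩ Tᶜ).card.choose 2 : ℝ)) * V T
        = (((r : ℝ) - 1) / 2) *
            (((S ∩ T).card.choose 2 : ℝ) * (2 * T.card - r)
              + ((Sᶜ ∩ Tᶜ).card.choose 2 : ℝ) * (2 * T.card - r)) := by
      intro T
      rw [hVW T]
      ring
    have k1 := familyC_key_sum S
    have k2 := familyC_key_sum_compl S
    rw [hrcard] at k1 k2
    simp only [Matrix.mulVec, dotProduct, Mmat, Pi.smul_apply, smul_eq_mul]
    rw [Finset.sum_congr rfl (fun T _ => expand T), ← Finset.mul_sum,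
      Finset.sum_add_distrib, k1, k2, hV S, hcomplS]
    have hrs : ((r - S.card : ℕ) : ℝ) = (r : ℝ) - S.card := Nat.cast_sub hS
    simp only [Nat.cast_choose_two, hrs]
    ring
  · intro h0
    have h := congrFun h0 ∅
    rw [hV ∅] at h
    simp only [Finset.card_empty, Nat.sub_zero, Pi.zero_apply,
      show (0 : ℕ).choose 2 = 0 from rfl, Nat.cast_zero, zero_sub, neg_eq_zero] at h
    have hpos : (0 : ℝ) < (r.choose 2 : ℝ) := by
      exact_mod_cast Nat.choose_pos (by omega)
    rw [h] at hpos
    exact lt_irrefl 0 hpos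
end

section
/- Let r ≥ 4 and let U ⊆ [r] with |U| < r − 2. Define V ∈ ℝ^(𝒫([r])) by V_T = (−1)^(|T|) if U ⊆ T and V_T = 0 otherwise. Then M_r V = 0, i.e., V lies in the kernel of M_r. -/
namespace Finset

variable {α R : Type*} [DecidableEq α] [CommRing R]

theorem sum_Icc_neg_one_pow_card_eq_zero {U A : Finset α} (h : U ≠ A) :
    ∑ T ∈ Icc U A, (-1 : R) ^ #T = 0 := by
  by_cases hUA : U ⊆ A
  · have hne : (A \ U).Nonempty := sdiff_nonempty.2 fun hAU => h (hUA.antisymm hAU)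
    have hdisj : ∀ W ∈ (A \ U).powerset, Disjoint U W := fun W hW =>
      disjoint_of_subset_right (mem_powerset.1 hW) disjoint_sdiff
    rw [Icc_eq_image_powerset hUA, sum_image fun W hW W' hW' hWW' => by
      rw [← union_sdiff_cancel_left (hdisj W hW), ← union_sdiff_cancel_left (hdisj W' hW')]
      exact congrArg (· \ U) hWW']
    calc ∑ W ∈ (A \ U).powerset, (-1 : R) ^ #(U ∪ W)
        = (-1 : R) ^ #U * ∑ W ∈ (A \ U).powerset, (-1 : R) ^ #W := by
          rw [mul_sum]
          exact sum_congr rfl fun W hW => by rw [card_union_of_disjoint (hdisj W hW), pow_add]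
      _ = 0 := by
          have h := congrArg (Int.cast : ℤ → R) (sum_powerset_neg_one_pow_card_of_nonempty hne)
          push_cast at h
          rw [h, mul_zero]
  · rw [Icc_eq_empty hUA, sum_empty]

theorem choose_card_inter_eq_card_filter (S T : Finset α) (k : ℕ) :
    (S ∩ T).card.choose k = #{P ∈ S.powersetCard k | P ⊆ T} := by
  rw [← card_powersetCard]
  congr 1; ext P
  simp only [mem_powersetCard, mem_filter, subset_inter_iff]
  tauto

variable [Fintype α]

theorem sum_Ici_neg_one_pow_card_mul_choose_card_inter {U : Finset α} (S : Finset α)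
    {k : ℕ} (h : #U + k < Fintype.card α) :
    ∑ T ∈ Ici U, (-1 : R) ^ #T * (S ∩ T).card.choose k = 0 := by
  calc ∑ T ∈ Ici U, (-1 : R) ^ #T * (S ∩ T).card.choose k
      = ∑ T ∈ Ici U, ∑ P ∈ S.powersetCard k with P ⊆ T, (-1 : R) ^ #T := by
        simp only [choose_card_inter_eq_card_filter, sum_const, nsmul_eq_mul, mul_comm]
    _ = ∑ P ∈ S.powersetCard k, ∑ T ∈ Icc (U ∪ P) univ, (-1 : R) ^ #T :=
        sum_comm' fun T P => by
          simp only [mem_Ici, mem_filter, mem_Icc, union_subset_iff, subset_univ]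
          tauto
    _ = 0 := sum_eq_zero fun P hP => sum_Icc_neg_one_pow_card_eq_zero <| ne_of_apply_ne card <| by
        have := (mem_powersetCard.1 hP).2 ▸ card_union_le U P
        rw [card_univ]
        omega

theorem sum_Ici_neg_one_pow_card_mul_choose_card_inter_compl {U : Finset α} (S : Finset α)
    {k : ℕ} (h : #U + k < Fintype.card α) :
    ∑ T ∈ Ici U, (-1 : R) ^ #T * (S ∩ Tᶜ).card.choose k = 0 := by
  calc ∑ T ∈ Ici U, (-1 : R) ^ #T * (S ∩ Tᶜ).card.choose k
      = ∑ T ∈ Ici U, ∑ P ∈ S.powersetCard k with P ⊆ Tᶜ, (-1 : R) ^ #T := by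
        simp only [choose_card_inter_eq_card_filter, sum_const, nsmul_eq_mul, mul_comm]
    _ = ∑ P ∈ S.powersetCard k, ∑ T ∈ Icc U Pᶜ, (-1 : R) ^ #T :=
        sum_comm' fun T P => by simp only [mem_Ici, mem_filter, mem_Icc, subset_compl_comm]; tauto
    _ = 0 := sum_eq_zero fun P hP => sum_Icc_neg_one_pow_card_eq_zero <| ne_of_apply_ne card <| by
        rw [card_compl, (mem_powersetCard.1 hP).2]
        omega

end Finset

open Finset

theorem familyD_kernel_general (r : ℕ) (U : Finset (Fin r)) (hU : U.card < r - 2)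
    (V : Finset (Fin r) → ℝ)
    (hV : ∀ T : Finset (Fin r), V T = if U ⊆ T then (-1 : ℝ) ^ T.card else 0) :
    (Mmat r).mulVec V = 0 := by
  funext S
  have hcard : #U + 2 < Fintype.card (Fin r) := by rw [Fintype.card_fin]; omega
  calc (Mmat r).mulVec V S
      = ∑ T ∈ Ici U, (-1 : ℝ) ^ #T * (S ∩ T).card.choose 2
        + ∑ T ∈ Ici U, (-1 : ℝ) ^ #T * (Sᶜ ∩ Tᶜ).card.choose 2 := by
        simp only [Matrix.mulVec, dotProduct, Mmat, hV, mul_ite, mul_zero, ← sum_filter,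
          ← sum_add_distrib]
        exact sum_congr (by ext; simp) fun T _ => by ring
    _ = 0 := by
      rw [sum_Ici_neg_one_pow_card_mul_choose_card_inter S hcard,
        sum_Ici_neg_one_pow_card_mul_choose_card_inter_compl Sᶜ hcard, add_zero]

/-- For `r ≥ 4` and `U ⊆ [r]` with `|U| < r − 2`, the vector `V` with
`V_T = (−1)^|T|` if `U ⊆ T` and `V_T = 0` otherwise lies in the kernel of `M_r`. -/
theorem familyD_kernel (r : ℕ) (hr : 4 ≤ r) (U : Finset (Fin r)) (hU : U.card < r - 2)
    (V : Finset (Fin r) → ℝ)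
    (hV : ∀ T : Finset (Fin r), V T = if U ⊆ T then (-1 : ℝ) ^ T.card else 0) :
    (Mmat r).mulVec V = 0 :=
  familyD_kernel_general r U hU V hV
end

section
/- Let r ≥ 4 and let x, y ∈ [r] with x ≠ y. Define V ∈ ℝ^(𝒫([r])) by V_T = 1_T(x) − 1_T(y), where 1_T(z) = 1 if z ∈ T and 0 otherwise. Then V is an eigenvector of M_r with eigenvalue 2^(r−3)·(r − 2). -/
open Finset Matrix

namespace Finset

variable {α : Type*} [DecidableEq α]

theorem card_eq_card_sdiff_pair_add (s : Finset α) {x y : α} (hxy : x ≠ y) :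
    #s = #(s \ {x, y}) + ((if x ∈ s then 1 else 0) + if y ∈ s then 1 else 0) := by
  rw [← card_sdiff_add_card_inter s {x, y}, inter_comm, ← filter_mem_eq_inter, card_filter,
    sum_pair hxy]

theorem filter_mem_Icc (I J : Finset α) (a : α) :
    {T ∈ Icc I J | a ∈ T} = Icc (insert a I) J := by
  ext T
  simp only [mem_filter, mem_Icc, insert_subset_iff]
  tauto

theorem filter_notMem_Icc (I J : Finset α) (a : α) :
    {T ∈ Icc I J | a ∉ T} = Icc I (J.erase a) := by
  ext T
  simp only [mem_filter, mem_Icc, subset_erase]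
  tauto

theorem sum_card_inter_Icc {A I J : Finset α} (hIJ : I ⊆ J) (hA : A ⊆ J \ I) :
    ∑ T ∈ Icc I J, #(A ∩ T) = #A * 2 ^ (#J - #I - 1) := by
  refine sum_card_inter fun a ha => ?_
  obtain ⟨haJ, haI⟩ := mem_sdiff.1 (hA ha)
  rw [filter_mem_Icc, card_Icc_finset (insert_subset haJ hIJ), card_insert_of_notMem haI,
    Nat.sub_add_eq]

theorem sum_card_sdiff_Icc {A I J : Finset α} (hIJ : I ⊆ J) (hA : A ⊆ J \ I) :
    ∑ T ∈ Icc I J, #(A \ T) = #A * 2 ^ (#J - #I - 1) := by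
  have hcount : ∀ a ∈ A, #{T ∈ Icc I J | a ∉ T} = 2 ^ (#J - #I - 1) := fun a ha => by
    obtain ⟨haJ, haI⟩ := mem_sdiff.1 (hA ha)
    rw [filter_notMem_Icc, card_Icc_finset (subset_erase.2 ⟨hIJ, haI⟩),
      card_erase_of_mem haJ, Nat.sub_right_comm]
  simp_rw [← filter_notMem_eq_sdiff, card_filter]
  rw [sum_comm]
  simp_rw [← card_filter]
  rw [sum_congr rfl hcount, sum_const, smul_eq_mul]

variable [Fintype α]

theorem card_sdiff_add_card_compl_sdiff (S P : Finset α) :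
    #(S \ P) + #(Sᶜ \ P) = Fintype.card α - #P := by
  rw [← card_compl, ← card_inter_add_card_sdiff Pᶜ S]
  congr 2 <;> ext a <;> simp <;> tauto

theorem mem_Icc_singleton_compl_singleton {x y : α} {T : Finset α} :
    T ∈ Icc {x} {y}ᶜ ↔ x ∈ T ∧ y ∉ T := by
  simp [subset_compl_singleton]

end Finset

theorem mulVec_apply_eq_sum_Icc_sub_swap {α R : Type*} [Fintype α] [DecidableEq α] [CommRing R]
    (M : Matrix (Finset α) (Finset α) R) {x y : α} (V : Finset α → R)
    (hV : ∀ T, V T = (if x ∈ T then (1 : R) else 0) - (if y ∈ T then (1 : R) else 0))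
    (S : Finset α) :
    (M *ᵥ V) S = ∑ T ∈ Icc {x} {y}ᶜ, (M S T - M S ((Equiv.swap x y).finsetCongr T)) := by
  set σ := (Equiv.swap x y).finsetCongr
  have hσσ : ∀ T, σ (σ T) = T := fun T => by ext a; simp [σ, mem_map_equiv]
  have hV' : ∀ T, V T =
      (if T ∈ Icc {x} {y}ᶜ then 1 else 0) - (if σ T ∈ Icc {x} {y}ᶜ then 1 else 0) := by
    intro T
    simp only [hV, σ, mem_Icc_singleton_compl_singleton]
    by_cases hx : x ∈ T <;> by_cases hy : y ∈ T <;> simp [hx, hy, mem_map_equiv]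
  have hreindex : ∑ T, M S T * (if σ T ∈ Icc {x} {y}ᶜ then 1 else 0)
      = ∑ T, M S (σ T) * (if T ∈ Icc {x} {y}ᶜ then 1 else 0) := by
    rw [← σ.sum_comp]
    simp_rw [hσσ]
  simp_rw [mulVec, dotProduct, hV', mul_sub, sum_sub_distrib, hreindex, ← sum_sub_distrib,
    ← sub_mul, mul_boole, sum_ite_mem, univ_inter]

theorem Nat.succ_choose_two (n : ℕ) : (n + 1).choose 2 = n.choose 2 + n := by
  rw [Nat.choose_succ_succ', Nat.choose_one_right, add_comm]

theorem Mmat_sub_Mmat_swap {r : ℕ} {x y : Fin r} (hxy : x ≠ y) (S : Finset (Fin r))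
    {T : Finset (Fin r)} (hT : T ∈ Icc {x} {y}ᶜ) :
    Mmat r S T - Mmat r S ((Equiv.swap x y).finsetCongr T) =
      ((if x ∈ S then 1 else 0) - (if y ∈ S then 1 else 0)) *
        ((#((S \ {x, y}) ∩ T) : ℝ) + #((Sᶜ \ {x, y}) \ T)) := by
  obtain ⟨hx, hy⟩ := mem_Icc_singleton_compl_singleton.1 hT
  set T' := (Equiv.swap x y).finsetCongr T
  have hT' : ∀ a, a ∈ T' ↔ a ∈ T ∧ a ≠ x ∨ a = y := by
    intro a
    simp only [T', Equiv.finsetCongr_apply, mem_map_equiv, Equiv.symm_swap, Equiv.swap_apply_def]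
    split_ifs <;> simp_all
  have h1 : (S ∩ T) \ {x, y} = (S \ {x, y}) ∩ T := by ext a; simp; tauto
  have h2 : (S ∩ T') \ {x, y} = (S \ {x, y}) ∩ T := by ext a; simp [hT']; tauto
  have h3 : (Sᶜ ∩ Tᶜ) \ {x, y} = (Sᶜ \ {x, y}) \ T := by ext a; simp; tauto
  have h4 : (Sᶜ ∩ T'ᶜ) \ {x, y} = (Sᶜ \ {x, y}) \ T := by ext a; simp [hT']; tauto
  unfold Mmat
  rw [card_eq_card_sdiff_pair_add (S ∩ T) hxy, card_eq_card_sdiff_pair_add (S ∩ T') hxy,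
    card_eq_card_sdiff_pair_add (Sᶜ ∩ Tᶜ) hxy, card_eq_card_sdiff_pair_add (Sᶜ ∩ T'ᶜ) hxy,
    h1, h2, h3, h4]
  by_cases hxS : x ∈ S <;> by_cases hyS : y ∈ S <;>
    simp [hT', hxS, hyS, hx, hy, hxy, hxy.symm, Nat.succ_choose_two] <;> ring

theorem familyE_eigenvector_general (r : ℕ) (x y : Fin r) (hxy : x ≠ y)
    (V : Finset (Fin r) → ℝ)
    (hV : ∀ T : Finset (Fin r),
      V T = (if x ∈ T then (1 : ℝ) else 0) - (if y ∈ T then (1 : ℝ) else 0)) :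
    (Mmat r).mulVec V = ((2 : ℝ) ^ (r - 3) * ((r : ℝ) - 2)) • V ∧ V ≠ 0 := by
  have hr : 2 ≤ r := by simpa [card_pair hxy] using card_le_univ ({x, y} : Finset (Fin r))
  have hxy' : {x} ⊆ ({y}ᶜ : Finset (Fin r)) := by simpa using hxy.symm
  have hexp : #({y}ᶜ : Finset (Fin r)) - #{x} - 1 = r - 3 := by
    rw [card_compl, card_singleton, card_singleton, Fintype.card_fin]; omega
  refine ⟨funext fun S => ?_, fun h => ?_⟩
  · have hin : S \ {x, y} ⊆ {y}ᶜ \ {x} := fun a => by simp; tauto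
    have hout : Sᶜ \ {x, y} ⊆ {y}ᶜ \ {x} := fun a => by simp; tauto
    have hagree : #(S \ {x, y}) + #(Sᶜ \ {x, y}) = r - 2 := by
      rw [card_sdiff_add_card_compl_sdiff, card_pair hxy, Fintype.card_fin]
    rw [mulVec_apply_eq_sum_Icc_sub_swap _ V hV, sum_congr rfl fun _ => Mmat_sub_Mmat_swap hxy S,
      ← mul_sum, sum_add_distrib, ← Nat.cast_sum, ← Nat.cast_sum, sum_card_inter_Icc hxy' hin,
      sum_card_sdiff_Icc hxy' hout, hexp, ← Nat.cast_add, ← add_mul, hagree, ← hV,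
      Pi.smul_apply, smul_eq_mul]
    push_cast [hr]
    ring
  · simpa [hxy.symm] using (hV {x}).symm.trans (congrFun h {x})

/-- For `r ≥ 4` and distinct `x, y ∈ [r]`, the vector `V` with
`V_T = 1_T(x) − 1_T(y)` is an eigenvector of `M_r` with eigenvalue `2^(r−3)·(r − 2)`. -/
theorem familyE_eigenvector (r : ℕ) (hr : 4 ≤ r) (x y : Fin r) (hxy : x ≠ y)
    (V : Finset (Fin r) → ℝ)
    (hV : ∀ T : Finset (Fin r),
      V T = (if x ∈ T then (1 : ℝ) else 0) - (if y ∈ T then (1 : ℝ) else 0)) :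
    (Mmat r).mulVec V = ((2 : ℝ) ^ (r - 3) * ((r : ℝ) - 2)) • V ∧ V ≠ 0 :=
  familyE_eigenvector_general r x y hxy V hV
end

section
/- Let r ≥ 4 and let w, x, y, z be four distinct elements of [r]. Define V ∈ ℝ^(𝒫([r])) by V_T = (1_T(w) − 1_T(x)) · (1_T(y) − 1_T(z)), where 1_T(v) = 1 if v ∈ T and 0 otherwise. Then V is an eigenvector of M_r with eigenvalue 2^(r−3). -/
open Finset Matrix

section
variable {α : Type*} [DecidableEq α]

def crossVec (w x y z : α) (T : Finset α) : ℝ :=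
  ((if w ∈ T then (1 : ℝ) else 0) - (if x ∈ T then (1 : ℝ) else 0))
    * ((if y ∈ T then (1 : ℝ) else 0) - (if z ∈ T then (1 : ℝ) else 0))

lemma crossVec_comm (w x y z : α) : crossVec w x y z = crossVec y z w x := by
  ext T; simp only [crossVec]; ring

lemma crossVec_swap_left (w x y z : α) : crossVec x w y z = -crossVec w x y z := by
  ext T; simp only [crossVec, Pi.neg_apply]; ring

lemma crossVec_swap_right (w x y z : α) : crossVec w x z y = -crossVec w x y z := by
  ext T; simp only [crossVec, Pi.neg_apply]; ring

lemma crossVec_pair_eq_one {w x y z : α} (hwx : w ≠ x) (hxy : x ≠ y) (hwz : w ≠ z) (hyz : y ≠ z) :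
    crossVec w x y z {w, y} = 1 := by
  simp [crossVec, hwx.symm, hwz.symm, hyz.symm, hxy]

lemma crossVec_map_swap {w x y z : α} (hyw : y ≠ w) (hyx : y ≠ x) (hzw : z ≠ w) (hzx : z ≠ x)
    (T : Finset α) :
    crossVec w x y z (T.map (Equiv.swap w x).toEmbedding) = -crossVec w x y z T := by
  simp only [crossVec, mem_map_equiv, Equiv.symm_swap, Equiv.swap_apply_left,
    Equiv.swap_apply_right, Equiv.swap_apply_of_ne_of_ne hyw hyx,
    Equiv.swap_apply_of_ne_of_ne hzw hzx]
  ring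

lemma eq_pair_of_card_eq_two {P : Finset α} (hP : #P = 2) {a b : α} (ha : a ∈ P) (hb : b ∈ P)
    (hab : a ≠ b) : P = {a, b} :=
  (eq_of_subset_of_card_le (insert_subset ha (singleton_subset_iff.2 hb))
    (by rw [hP, card_pair hab])).symm

variable [Fintype α]

lemma choose_two_card_eq_sum (S : Finset α) :
    ((#S).choose 2 : ℝ) = ∑ P ∈ powersetCard 2 univ, if P ⊆ S then 1 else 0 := by
  rw [sum_boole, ← card_powersetCard]
  congr 2
  ext P
  simp [mem_powersetCard, and_comm]

lemma crossVec_compl (w x y z : α) (T : Finset α) :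
    crossVec w x y z Tᶜ = crossVec w x y z T := by
  simp only [crossVec, mem_compl]; split_ifs <;> ring

lemma sum_filter_compl (p : Finset α → Prop) [DecidablePred p] (f : Finset α → ℝ) :
    ∑ T with p Tᶜ, f T = ∑ T with p T, f Tᶜ := by
  rw [sum_filter, sum_filter]
  simpa only [Function.Involutive.coe_toPerm, compl_compl] using
    Equiv.sum_comp (compl_involutive.toPerm (compl : Finset α → Finset α))
      fun T => if p T then f Tᶜ else 0

lemma sum_supset_eq_zero_of_map_swap {a b : α} {P : Finset α} (ha : a ∉ P) (hb : b ∉ P)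
    {f : Finset α → ℝ} (hf : ∀ T, f (T.map (Equiv.swap a b).toEmbedding) = -f T) :
    ∑ T with P ⊆ T, f T = 0 := by
  have hP (T : Finset α) : P ⊆ T.map (Equiv.swap a b).toEmbedding ↔ P ⊆ T := by
    simp only [subset_iff, mem_map_equiv, Equiv.symm_swap]
    exact forall₂_congr fun i hi => by
      rw [Equiv.swap_apply_of_ne_of_ne (ne_of_mem_of_not_mem hi ha) (ne_of_mem_of_not_mem hi hb)]
  have key := (Equiv.swap a b).finsetCongr.sum_comp fun T => if P ⊆ T then f T else 0
  simp only [Equiv.finsetCongr_apply, hf, hP, ← sum_filter, sum_neg_distrib] at key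
  linarith

lemma sum_supset_crossVec_eq_zero_of_left {w x y z : α} (hyw : y ≠ w) (hyx : y ≠ x)
    (hzw : z ≠ w) (hzx : z ≠ x) {P : Finset α} (hw : w ∉ P) (hx : x ∉ P) :
    ∑ T with P ⊆ T, crossVec w x y z T = 0 :=
  sum_supset_eq_zero_of_map_swap hw hx (crossVec_map_swap hyw hyx hzw hzx)

lemma sum_supset_crossVec_eq_zero_of_right {w x y z : α} (hwy : w ≠ y) (hwz : w ≠ z)
    (hxy : x ≠ y) (hxz : x ≠ z) {P : Finset α} (hy : y ∉ P) (hz : z ∉ P) :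
    ∑ T with P ⊆ T, crossVec w x y z T = 0 := by
  rw [crossVec_comm]
  exact sum_supset_crossVec_eq_zero_of_left hwy hwz hxy hxz hy hz

lemma sum_supset_crossVec_pair {w x y z : α} (hwx : w ≠ x) (hwy : w ≠ y) (hwz : w ≠ z)
    (hxy : x ≠ y) (hxz : x ≠ z) (hyz : y ≠ z) :
    ∑ T with ({w, y} : Finset α) ⊆ T, crossVec w x y z T = 2 ^ (Fintype.card α - 4) := by
  have hsub : {w, y} ⊆ ({x, z}ᶜ : Finset α) := by
    simp [insert_subset_iff, hwx, hwz, hxy.symm, hyz]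
  calc ∑ T with ({w, y} : Finset α) ⊆ T, crossVec w x y z T
      = ∑ T with ({w, y} : Finset α) ⊆ T, if T ⊆ {x, z}ᶜ then (1 : ℝ) else 0 := by
        refine sum_congr rfl fun T hT => ?_
        simp only [mem_filter, mem_univ, true_and, insert_subset_iff, singleton_subset_iff] at hT
        simp only [subset_compl_iff_disjoint_right, disjoint_insert_right, disjoint_singleton_right]
        by_cases hx : x ∈ T <;> by_cases hz : z ∈ T <;> simp [crossVec, hT.1, hT.2, hx, hz]
    _ = #(Icc {w, y} ({x, z}ᶜ : Finset α)) := by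
        rw [sum_boole, Icc_eq_filter_powerset]
        congr 2; ext T; simp [and_comm]
    _ = 2 ^ (Fintype.card α - 4) := by
        rw [card_Icc_finset hsub, card_compl, card_pair hxz, card_pair hwy]
        norm_num [Nat.sub_sub]

lemma sum_powersetCard_two_mul_sum_supset_crossVec {w x y z : α} (hwx : w ≠ x) (hwy : w ≠ y)
    (hwz : w ≠ z) (hxy : x ≠ y) (hxz : x ≠ z) (hyz : y ≠ z) (c : Finset α → ℝ) :
    ∑ P ∈ powersetCard 2 univ, c P * ∑ T with P ⊆ T, crossVec w x y z T
      = 2 ^ (Fintype.card α - 4) * (c {w, y} - c {w, z} - c {x, y} + c {x, z}) := by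
  set E : Finset (Finset α) := {{w, y}, {w, z}, {x, y}, {x, z}}
  have hE : E ⊆ powersetCard 2 univ := by
    simp [E, insert_subset_iff, *]
  have hvanish : ∀ P ∈ powersetCard 2 univ, P ∉ E →
      c P * ∑ T with P ⊆ T, crossVec w x y z T = 0 := by
    intro P hP hPE
    rw [mem_powersetCard_univ] at hP
    by_cases hwx' : w ∈ P ∨ x ∈ P
    · by_cases hyz' : y ∈ P ∨ z ∈ P
      · exfalso
        apply hPE
        rcases hwx' with ha | ha <;> rcases hyz' with hb | hb <;>
          simp [E, eq_pair_of_card_eq_two hP ha hb ‹_›]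
      · rw [not_or] at hyz'
        rw [sum_supset_crossVec_eq_zero_of_right hwy hwz hxy hxz hyz'.1 hyz'.2, mul_zero]
    · rw [not_or] at hwx'
      rw [sum_supset_crossVec_eq_zero_of_left hwy.symm hxy.symm hwz.symm hxz.symm hwx'.1 hwx'.2,
        mul_zero]
  have hwz_pair : ∑ T with ({w, z} : Finset α) ⊆ T, crossVec w x y z T
      = -2 ^ (Fintype.card α - 4) := by
    rw [← neg_neg (crossVec w x y z), ← crossVec_swap_right]
    simp only [Pi.neg_apply, sum_neg_distrib]
    rw [sum_supset_crossVec_pair hwx hwz hwy hxz hxy hyz.symm]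
  have hxy_pair : ∑ T with ({x, y} : Finset α) ⊆ T, crossVec w x y z T
      = -2 ^ (Fintype.card α - 4) := by
    rw [← neg_neg (crossVec w x y z), ← crossVec_swap_left]
    simp only [Pi.neg_apply, sum_neg_distrib]
    rw [sum_supset_crossVec_pair hwx.symm hxy hxz hwy hwz hyz]
  have hxz_pair : ∑ T with ({x, z} : Finset α) ⊆ T, crossVec w x y z T
      = 2 ^ (Fintype.card α - 4) := by
    rw [← neg_neg (crossVec w x y z), ← crossVec_swap_left, ← crossVec_swap_right]
    exact sum_supset_crossVec_pair hwx.symm hxz hxy hwz hwy hyz.symm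
  rw [← sum_subset hE hvanish, sum_insert (by simp [← coe_inj, Set.pair_eq_pair_iff, *]),
    sum_insert (by simp [← coe_inj, Set.pair_eq_pair_iff, *]),
    sum_insert (by simp [← coe_inj, Set.pair_eq_pair_iff, *]), sum_singleton,
    sum_supset_crossVec_pair hwx hwy hwz hxy hxz hyz, hwz_pair, hxy_pair, hxz_pair]
  ring

end

lemma Mmat_apply_eq_sum {r : ℕ} (S T : Finset (Fin r)) :
    Mmat r S T = ∑ P ∈ powersetCard 2 univ,
      ((if P ⊆ S then 1 else 0) * (if P ⊆ T then 1 else 0)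
        + (if P ⊆ Sᶜ then 1 else 0) * (if P ⊆ Tᶜ then 1 else 0)) := by
  rw [Mmat, choose_two_card_eq_sum, choose_two_card_eq_sum, ← sum_add_distrib]
  simp only [subset_inter_iff, ite_zero_mul_ite_zero, mul_one]

lemma Mmat_mulVec_apply_of_compl {r : ℕ} {V : Finset (Fin r) → ℝ} (hV : ∀ T, V Tᶜ = V T)
    (S : Finset (Fin r)) :
    (Mmat r *ᵥ V) S = ∑ P ∈ powersetCard 2 univ,
      ((if P ⊆ S then 1 else 0) + (if P ⊆ Sᶜ then 1 else 0)) * ∑ T with P ⊆ T, V T := by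
  simp only [mulVec, dotProduct, Mmat_apply_eq_sum, sum_mul]
  rw [sum_comm]
  refine sum_congr rfl fun P _ => ?_
  calc _ = (if P ⊆ S then 1 else 0) * ∑ T with P ⊆ T, V T
        + (if P ⊆ Sᶜ then 1 else 0) * ∑ T with P ⊆ Tᶜ, V T := by
        simp only [sum_filter, mul_sum, ← sum_add_distrib]
        exact sum_congr rfl fun T _ => by split_ifs <;> ring
    _ = _ := by rw [sum_filter_compl, add_mul]; simp only [hV]

lemma Mmat_mulVec_crossVec {r : ℕ} (hr : 4 ≤ r) {w x y z : Fin r} (hwx : w ≠ x) (hwy : w ≠ y)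
    (hwz : w ≠ z) (hxy : x ≠ y) (hxz : x ≠ z) (hyz : y ≠ z) :
    Mmat r *ᵥ crossVec w x y z = (2 : ℝ) ^ (r - 3) • crossVec w x y z := by
  ext S
  rw [Mmat_mulVec_apply_of_compl (crossVec_compl w x y z),
    sum_powersetCard_two_mul_sum_supset_crossVec hwx hwy hwz hxy hxz hyz, Fintype.card_fin,
    Pi.smul_apply, smul_eq_mul, show r - 3 = r - 4 + 1 by omega, pow_succ, mul_assoc]
  congr 1
  simp only [crossVec, insert_subset_iff, singleton_subset_iff, mem_compl]
  by_cases hw : w ∈ S <;> by_cases hx : x ∈ S <;> by_cases hy : y ∈ S <;> by_cases hz : z ∈ S <;>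
    norm_num [hw, hx, hy, hz]

/-- For `r ≥ 4` and four distinct `w, x, y, z ∈ [r]`, the vector `V` with
`V_T = (1_T(w) − 1_T(x))·(1_T(y) − 1_T(z))` is an eigenvector of `M_r` with eigenvalue
`2^(r−3)`. -/
theorem familyF_eigenvector (r : ℕ) (hr : 4 ≤ r) (w x y z : Fin r)
    (hwx : w ≠ x) (hwy : w ≠ y) (hwz : w ≠ z) (hxy : x ≠ y) (hxz : x ≠ z) (hyz : y ≠ z)
    (V : Finset (Fin r) → ℝ)
    (hV : ∀ T : Finset (Fin r),
      V T = ((if w ∈ T then (1 : ℝ) else 0) - (if x ∈ T then (1 : ℝ) else 0))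
          * ((if y ∈ T then (1 : ℝ) else 0) - (if z ∈ T then (1 : ℝ) else 0))) :
    (Mmat r).mulVec V = ((2 : ℝ) ^ (r - 3)) • V ∧ V ≠ 0 := by
  obtain rfl : V = crossVec w x y z := funext hV
  refine ⟨Mmat_mulVec_crossVec hr hwx hwy hwz hxy hxz hyz, fun h => ?_⟩
  simpa [h] using crossVec_pair_eq_one hwx hxy hwz hyz
end

section
/- Let r ≥ 4 and let x, y ∈ [r] with x ≠ y. Define V ∈ ℝ^(𝒫([r])) by V_T = (r − 2|T|) · (1_T(x) − 1_T(y)), where 1_T(z) = 1 if z ∈ T and 0 otherwise. Then V is an eigenvector of M_r with eigenvalue 2^(r−3). -/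
open Finset

lemma master_sum {α : Type*} [DecidableEq α] (S : Finset α) (P : Finset α) :
    ∀ c d : ℝ, ∑ T ∈ P.powerset,
        (c - (T.card : ℝ) + 2 * ((T ∩ S).card : ℝ)) * (d - 2 * (T.card : ℝ))
      = 2 ^ P.card * (c * d - (2 * c + d) * P.card / 2 + P.card * (P.card + 1) / 2
          + d * ((S ∩ P).card : ℝ) - ((S ∩ P).card : ℝ) * (P.card + 1)) := by
  induction P using Finset.induction_on with
  | empty => intro c d; simp
  | @insert a P ha ih =>
      intro c d
      rw [Finset.sum_powerset_insert ha]
      by_cases haS : a ∈ S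
      · have h2 : ∀ T ∈ P.powerset,
            (c - ((insert a T).card : ℝ) + 2 * (((insert a T) ∩ S).card : ℝ))
                * (d - 2 * ((insert a T).card : ℝ))
            = ((c + 1) - (T.card : ℝ) + 2 * ((T ∩ S).card : ℝ))
                * ((d - 2) - 2 * (T.card : ℝ)) := by
          intro T hT
          have haT : a ∉ T := fun h => ha (Finset.mem_powerset.mp hT h)
          rw [Finset.insert_inter_of_mem haS, Finset.card_insert_of_notMem haT,
              Finset.card_insert_of_notMem (fun h => haT (Finset.mem_inter.mp h).1)]
          push_cast; ring
        rw [Finset.sum_congr rfl h2, ih, ih]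
        have hs : S ∩ insert a P = insert a (S ∩ P) := Finset.inter_insert_of_mem haS
        have haSP : a ∉ S ∩ P := fun h => ha (Finset.mem_inter.mp h).2
        rw [hs, Finset.card_insert_of_notMem haSP, Finset.card_insert_of_notMem ha]
        push_cast; ring
      · have h2 : ∀ T ∈ P.powerset,
            (c - ((insert a T).card : ℝ) + 2 * (((insert a T) ∩ S).card : ℝ))
                * (d - 2 * ((insert a T).card : ℝ))
            = ((c - 1) - (T.card : ℝ) + 2 * ((T ∩ S).card : ℝ))
                * ((d - 2) - 2 * (T.card : ℝ)) := by
          intro T hT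
          have haT : a ∉ T := fun h => ha (Finset.mem_powerset.mp hT h)
          rw [Finset.insert_inter_of_notMem haS, Finset.card_insert_of_notMem haT]
          push_cast; ring
        rw [Finset.sum_congr rfl h2, ih, ih]
        have hs : S ∩ insert a P = S ∩ P := Finset.inter_insert_of_notMem haS
        rw [hs, Finset.card_insert_of_notMem ha]
        push_cast; ring

lemma step_lemma (r : ℕ) (x y : Fin r) (S T : Finset (Fin r))
    (hxT : x ∉ T) (hyT : y ∉ T) :
    Mmat r S (insert y T) * (((r : ℝ) - 2 * ((insert y T).card : ℝ)) * ((0 : ℝ) - 1))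
      + Mmat r S (insert x T) * (((r : ℝ) - 2 * ((insert x T).card : ℝ)) * ((1 : ℝ) - 0))
    = ((if x ∈ S then (1 : ℝ) else 0) - (if y ∈ S then (1 : ℝ) else 0))
        * (((((r : ℝ) - (S.card : ℝ) - 1) - (T.card : ℝ) + 2 * ((T ∩ S).card : ℝ))
            * (((r : ℝ) - 2) - 2 * (T.card : ℝ)))) := by
  have hcx : (insert x T).card = T.card + 1 := Finset.card_insert_of_notMem hxT
  have hcy : (insert y T).card = T.card + 1 := Finset.card_insert_of_notMem hyT
  have hm : (((Sᶜ ∩ Tᶜ).card : ℝ)) = (r : ℝ) - S.card - T.card + ((S ∩ T).card : ℝ) := by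
    have h1 : Sᶜ ∩ Tᶜ = (S ∪ T)ᶜ := (Finset.compl_union S T).symm
    have h3 : (S ∪ T).card ≤ r := by
      have := Finset.card_le_univ (S ∪ T)
      simpa using this
    have h2 : ((S ∪ T).card : ℝ) = (S.card : ℝ) + T.card - (S ∩ T).card := by
      have h := Finset.card_union_add_card_inter S T
      have := congrArg (Nat.cast : ℕ → ℝ) h
      push_cast at this; linarith
    rw [h1, Finset.card_compl, Fintype.card_fin, Nat.cast_sub h3, h2]; ring
  have hTS : (T ∩ S).card = (S ∩ T).card := by rw [Finset.inter_comm]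
  -- set computations per membership case
  by_cases hxS : x ∈ S <;> by_cases hyS : y ∈ S
  · -- both in S
    have ex1 : S ∩ insert x T = insert x (S ∩ T) := Finset.inter_insert_of_mem hxS
    have ey1 : S ∩ insert y T = insert y (S ∩ T) := Finset.inter_insert_of_mem hyS
    have ex2 : Sᶜ ∩ (insert x T)ᶜ = Sᶜ ∩ Tᶜ := by
      rw [Finset.compl_insert, Finset.inter_erase, Finset.erase_eq_of_notMem]
      intro h
      exact (Finset.mem_compl.mp (Finset.mem_inter.mp h).1) hxS
    have ey2 : Sᶜ ∩ (insert y T)ᶜ = Sᶜ ∩ Tᶜ := by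
      rw [Finset.compl_insert, Finset.inter_erase, Finset.erase_eq_of_notMem]
      intro h
      exact (Finset.mem_compl.mp (Finset.mem_inter.mp h).1) hyS
    have hx3 : x ∉ S ∩ T := fun h => hxT (Finset.mem_inter.mp h).2
    have hy3 : y ∉ S ∩ T := fun h => hyT (Finset.mem_inter.mp h).2
    simp only [Mmat, ex1, ex2, ey1, ey2, Finset.card_insert_of_notMem hx3,
      Finset.card_insert_of_notMem hy3, hcx, hcy, hTS, if_pos hxS, if_pos hyS,
      Nat.cast_choose_two]
    push_cast
    ring
  · -- x ∈ S, y ∉ S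
    have ex1 : S ∩ insert x T = insert x (S ∩ T) := Finset.inter_insert_of_mem hxS
    have ey1 : S ∩ insert y T = S ∩ T := Finset.inter_insert_of_notMem hyS
    have ex2 : Sᶜ ∩ (insert x T)ᶜ = Sᶜ ∩ Tᶜ := by
      rw [Finset.compl_insert, Finset.inter_erase, Finset.erase_eq_of_notMem]
      intro h
      exact (Finset.mem_compl.mp (Finset.mem_inter.mp h).1) hxS
    have ey2 : Sᶜ ∩ (insert y T)ᶜ = (Sᶜ ∩ Tᶜ).erase y := by
      rw [Finset.compl_insert, Finset.inter_erase]
    have hymem : y ∈ Sᶜ ∩ Tᶜ :=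
      Finset.mem_inter.mpr ⟨Finset.mem_compl.mpr hyS, Finset.mem_compl.mpr hyT⟩
    have hx3 : x ∉ S ∩ T := fun h => hxT (Finset.mem_inter.mp h).2
    have hcerase : (((Sᶜ ∩ Tᶜ).erase y).card : ℝ) = ((Sᶜ ∩ Tᶜ).card : ℝ) - 1 :=
      Finset.cast_card_erase_of_mem hymem
    simp only [Mmat, ex1, ex2, ey1, ey2, Finset.card_insert_of_notMem hx3,
      hcx, hcy, hTS, if_pos hxS, if_neg hyS, Nat.cast_choose_two]
    push_cast
    push_cast at hcerase hm
    rw [hcerase, hm]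
    ring
  · -- x ∉ S, y ∈ S
    have ex1 : S ∩ insert x T = S ∩ T := Finset.inter_insert_of_notMem hxS
    have ey1 : S ∩ insert y T = insert y (S ∩ T) := Finset.inter_insert_of_mem hyS
    have ey2 : Sᶜ ∩ (insert y T)ᶜ = Sᶜ ∩ Tᶜ := by
      rw [Finset.compl_insert, Finset.inter_erase, Finset.erase_eq_of_notMem]
      intro h
      exact (Finset.mem_compl.mp (Finset.mem_inter.mp h).1) hyS
    have ex2 : Sᶜ ∩ (insert x T)ᶜ = (Sᶜ ∩ Tᶜ).erase x := by
      rw [Finset.compl_insert, Finset.inter_erase]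
    have hxmem : x ∈ Sᶜ ∩ Tᶜ :=
      Finset.mem_inter.mpr ⟨Finset.mem_compl.mpr hxS, Finset.mem_compl.mpr hxT⟩
    have hy3 : y ∉ S ∩ T := fun h => hyT (Finset.mem_inter.mp h).2
    have hcerase : (((Sᶜ ∩ Tᶜ).erase x).card : ℝ) = ((Sᶜ ∩ Tᶜ).card : ℝ) - 1 :=
      Finset.cast_card_erase_of_mem hxmem
    simp only [Mmat, ex1, ex2, ey1, ey2, Finset.card_insert_of_notMem hy3,
      hcx, hcy, hTS, if_neg hxS, if_pos hyS, Nat.cast_choose_two]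
    push_cast
    push_cast at hcerase hm
    rw [hcerase, hm]
    ring
  · -- both out
    have ex1 : S ∩ insert x T = S ∩ T := Finset.inter_insert_of_notMem hxS
    have ey1 : S ∩ insert y T = S ∩ T := Finset.inter_insert_of_notMem hyS
    have ex2 : Sᶜ ∩ (insert x T)ᶜ = (Sᶜ ∩ Tᶜ).erase x := by
      rw [Finset.compl_insert, Finset.inter_erase]
    have ey2 : Sᶜ ∩ (insert y T)ᶜ = (Sᶜ ∩ Tᶜ).erase y := by
      rw [Finset.compl_insert, Finset.inter_erase]
    have hxmem : x ∈ Sᶜ ∩ Tᶜ :=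
      Finset.mem_inter.mpr ⟨Finset.mem_compl.mpr hxS, Finset.mem_compl.mpr hxT⟩
    have hymem : y ∈ Sᶜ ∩ Tᶜ :=
      Finset.mem_inter.mpr ⟨Finset.mem_compl.mpr hyS, Finset.mem_compl.mpr hyT⟩
    have hcex : (((Sᶜ ∩ Tᶜ).erase x).card : ℝ) = ((Sᶜ ∩ Tᶜ).card : ℝ) - 1 :=
      Finset.cast_card_erase_of_mem hxmem
    have hcey : (((Sᶜ ∩ Tᶜ).erase y).card : ℝ) = ((Sᶜ ∩ Tᶜ).card : ℝ) - 1 :=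
      Finset.cast_card_erase_of_mem hymem
    simp only [Mmat, ex1, ex2, ey1, ey2, hcx, hcy, hTS, if_neg hxS, if_neg hyS,
      Nat.cast_choose_two]
    push_cast
    push_cast at hcex hcey
    rw [hcex, hcey]
    ring

/-- For `r ≥ 4` and distinct `x, y ∈ [r]`, the vector `V` with
`V_T = (r − 2|T|)·(1_T(x) − 1_T(y))` is an eigenvector of `M_r` with eigenvalue
`2^(r−3)`. -/
theorem familyG_eigenvector (r : ℕ) (hr : 4 ≤ r) (x y : Fin r) (hxy : x ≠ y)
    (V : Finset (Fin r) → ℝ)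
    (hV : ∀ T : Finset (Fin r),
      V T = ((r : ℝ) - 2 * (T.card : ℝ))
          * ((if x ∈ T then (1 : ℝ) else 0) - (if y ∈ T then (1 : ℝ) else 0))) :
    (Mmat r).mulVec V = ((2 : ℝ) ^ (r - 3)) • V ∧ V ≠ 0 := by
  obtain ⟨q, rfl⟩ : ∃ q, r = q + 4 := ⟨r - 4, by omega⟩
  constructor
  · funext S
    rw [Pi.smul_apply, smul_eq_mul]
    classical
    set P : Finset (Fin (q + 4)) := ({x, y} : Finset (Fin (q + 4)))ᶜ with hP
    have hyP : y ∉ P := by simp [hP]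
    have hxyP : x ∉ insert y P := by simp [hP, hxy]
    have hU : (Finset.univ : Finset (Finset (Fin (q + 4)))) = (insert x (insert y P)).powerset := by
      have : insert x (insert y P) = (Finset.univ : Finset (Fin (q + 4))) := by
        ext z
        by_cases hzx : z = x <;> by_cases hzy : z = y <;>
          simp [hP, Finset.mem_insert, hzx, hzy]
      rw [this, Finset.powerset_univ]
    have hmv : (Mmat (q + 4)).mulVec V S
        = ∑ T ∈ (insert x (insert y P)).powerset, Mmat (q + 4) S T * V T := by
      rw [← hU]
      rfl
    rw [hmv, Finset.sum_powerset_insert hxyP, Finset.sum_powerset_insert hyP,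
        Finset.sum_powerset_insert hyP]
    have hA : ∑ T ∈ P.powerset, Mmat (q + 4) S T * V T = 0 := by
      refine Finset.sum_eq_zero fun T hT => ?_
      have hxT : x ∉ T := fun h => by
        have := Finset.mem_powerset.mp hT h
        simp [hP] at this
      have hyT : y ∉ T := fun h => by
        have := Finset.mem_powerset.mp hT h
        simp [hP] at this
      rw [hV T, if_neg hxT, if_neg hyT]
      ring
    have hD : ∑ T ∈ P.powerset,
        Mmat (q + 4) S (insert x (insert y T)) * V (insert x (insert y T)) = 0 := by
      refine Finset.sum_eq_zero fun T hT => ?_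
      have h1 : x ∈ insert x (insert y T) := Finset.mem_insert_self _ _
      have h2 : y ∈ insert x (insert y T) :=
        Finset.mem_insert_of_mem (Finset.mem_insert_self _ _)
      rw [hV, if_pos h1, if_pos h2]
      ring
    rw [hA, hD, zero_add, add_zero, ← Finset.sum_add_distrib]
    have hkey : ∀ T ∈ P.powerset,
        Mmat (q + 4) S (insert y T) * V (insert y T) + Mmat (q + 4) S (insert x T) * V (insert x T)
        = ((if x ∈ S then (1 : ℝ) else 0) - (if y ∈ S then (1 : ℝ) else 0))
            * ((((((q + 4 : ℕ) : ℝ) - (S.card : ℝ) - 1) - (T.card : ℝ) + 2 * ((T ∩ S).card : ℝ))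
                * ((((q + 4 : ℕ) : ℝ) - 2) - 2 * (T.card : ℝ)))) := by
      intro T hT
      have hsub := Finset.mem_powerset.mp hT
      have hxT : x ∉ T := fun h => by have := hsub h; simp [hP] at this
      have hyT : y ∉ T := fun h => by have := hsub h; simp [hP] at this
      have h1 : x ∈ insert x T := Finset.mem_insert_self _ _
      have h2 : y ∈ insert y T := Finset.mem_insert_self _ _
      have h3 : y ∉ insert x T := by
        simp only [Finset.mem_insert]
        rintro (h | h)
        · exact hxy h.symm
        · exact hyT h
      have h4 : x ∉ insert y T := by
        simp only [Finset.mem_insert]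
        rintro (h | h)
        · exact hxy h
        · exact hxT h
      rw [hV (insert y T), hV (insert x T), if_pos h1, if_pos h2, if_neg h3, if_neg h4]
      exact step_lemma (q + 4) x y S T hxT hyT
    rw [Finset.sum_congr rfl hkey, ← Finset.mul_sum,
        master_sum S P (((q + 4 : ℕ) : ℝ) - (S.card : ℝ) - 1) (((q + 4 : ℕ) : ℝ) - 2)]
    -- card facts
    have hcard2 : ({x, y} : Finset (Fin (q + 4))).card = 2 := by
      rw [Finset.card_insert_of_notMem (by simp [hxy]), Finset.card_singleton]
    have hPcard : P.card = q + 2 := by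
      rw [hP, Finset.card_compl, hcard2, Fintype.card_fin]
      omega
    rw [hV S, hPcard]
    by_cases hxS : x ∈ S <;> by_cases hyS : y ∈ S
    · rw [if_pos hxS, if_pos hyS]; ring
    · -- x ∈ S, y ∉ S : σ = s - 1
      rw [if_pos hxS, if_neg hyS]
      have hSxy : S ∩ ({x, y} : Finset (Fin (q + 4))) = {x} := by
        ext z
        simp only [Finset.mem_inter, Finset.mem_insert, Finset.mem_singleton]
        constructor
        · rintro ⟨hzS, h | h⟩
          · exact h
          · exact absurd (h ▸ hzS) hyS
        · rintro rfl; exact ⟨hxS, Or.inl rfl⟩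
      have hσ : ((S ∩ P).card : ℝ) = (S.card : ℝ) - 1 := by
        have hsd : S ∩ P = S \ ({x, y} : Finset (Fin (q + 4))) := by
          ext z; simp [hP]
        have h := Finset.card_sdiff_add_card_inter S ({x, y} : Finset (Fin (q + 4)))
        rw [hSxy, Finset.card_singleton] at h
        have := congrArg (Nat.cast : ℕ → ℝ) h
        push_cast at this
        rw [hsd]
        linarith
      rw [hσ]
      push_cast
      ring
    · -- x ∉ S, y ∈ S : σ = s - 1
      rw [if_neg hxS, if_pos hyS]
      have hSxy : S ∩ ({x, y} : Finset (Fin (q + 4))) = {y} := by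
        ext z
        simp only [Finset.mem_inter, Finset.mem_insert, Finset.mem_singleton]
        constructor
        · rintro ⟨hzS, h | h⟩
          · exact absurd (h ▸ hzS) hxS
          · exact h
        · rintro rfl; exact ⟨hyS, Or.inr rfl⟩
      have hσ : ((S ∩ P).card : ℝ) = (S.card : ℝ) - 1 := by
        have hsd : S ∩ P = S \ ({x, y} : Finset (Fin (q + 4))) := by
          ext z; simp [hP]
        have h := Finset.card_sdiff_add_card_inter S ({x, y} : Finset (Fin (q + 4)))
        rw [hSxy, Finset.card_singleton] at h
        have := congrArg (Nat.cast : ℕ → ℝ) h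
        push_cast at this
        rw [hsd]
        linarith
      rw [hσ]
      push_cast
      ring
    · rw [if_neg hxS, if_neg hyS]; ring
  · intro h0
    have h1 : V {x} = 0 := by rw [h0]; rfl
    rw [hV {x}] at h1
    have hy1 : y ∉ ({x} : Finset (Fin (q + 4))) := by simp [Ne.symm hxy]
    rw [if_pos (Finset.mem_singleton_self x), if_neg hy1, Finset.card_singleton] at h1
    push_cast at h1
    nlinarith [h1, Nat.cast_nonneg (α := ℝ) q]
end

section
/- Let r ≥ 4. The dimension of the kernel of M_r (the eigenspace of M_r associated with eigenvalue 0) is at least 2^r − C(r+1, 2). -/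
namespace KernelAux

variable {r : ℕ}

/-- indicator of `P ⊆ S` -/
def uvec (P : Finset (Fin r)) : Finset (Fin r) → ℝ := fun S => if P ⊆ S then 1 else 0

/-- indicator of `P ⊆ Sᶜ` -/
def vvec (P : Finset (Fin r)) : Finset (Fin r) → ℝ := fun S => if P ⊆ Sᶜ then 1 else 0

/-- indicator of `i ∈ S` -/
def avec (i : Fin r) : Finset (Fin r) → ℝ := fun S => if i ∈ S then 1 else 0

lemma sum_uu (S T : Finset (Fin r)) :
    ∑ P ∈ Finset.univ.powersetCard 2, uvec P S * uvec P T
      = ((S ∩ T).card.choose 2 : ℝ) := by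
  have h1 : ∀ P : Finset (Fin r), uvec P S * uvec P T
      = if P ⊆ S ∩ T then (1 : ℝ) else 0 := by
    intro P
    simp only [uvec, Finset.subset_inter_iff]
    by_cases h1 : P ⊆ S <;> by_cases h2 : P ⊆ T <;> simp [h1, h2]
  simp only [h1]
  rw [Finset.sum_boole]
  have : (Finset.univ.powersetCard 2).filter (· ⊆ S ∩ T)
      = (S ∩ T).powersetCard 2 := by
    ext P
    simp [Finset.mem_powersetCard, and_comm]
  rw [this]
  simp [Finset.card_powersetCard]

lemma sum_vv (S T : Finset (Fin r)) :
    ∑ P ∈ Finset.univ.powersetCard 2, vvec P S * vvec P T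
      = ((Sᶜ ∩ Tᶜ).card.choose 2 : ℝ) := by
  have := sum_uu (r := r) Sᶜ Tᶜ
  simpa [uvec, vvec] using this

lemma mmat_eq (S T : Finset (Fin r)) :
    Mmat r S T = ∑ P ∈ Finset.univ.powersetCard 2,
      (uvec P S * uvec P T + vvec P S * vvec P T) := by
  rw [Finset.sum_add_distrib, sum_uu, sum_vv, Mmat]

lemma vvec_eq {i j : Fin r} (hij : i ≠ j) :
    vvec {i, j} = uvec {i, j} - avec i - avec j + (fun _ => (1 : ℝ)) := by
  funext S
  simp only [vvec, uvec, avec, Pi.add_apply, Pi.sub_apply, Finset.insert_subset_iff,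
    Finset.singleton_subset_iff, Finset.mem_compl]
  by_cases h1 : i ∈ S <;> by_cases h2 : j ∈ S <;> simp [h1, h2]

end KernelAux

open KernelAux in
/-- For `r ≥ 4`, the dimension of the kernel of `M_r` is at least
`2^r − C(r+1, 2)`. -/
theorem kernel_dim_ge (r : ℕ) (hr : 4 ≤ r) :
    2 ^ r - (r + 1).choose 2 ≤
      Module.finrank ℝ (LinearMap.ker (Mmat r).mulVecLin) := by
  classical
  set f := (Mmat r).mulVecLin
  -- two distinguished indices
  have h0 : (0 : ℕ) < r := by omega
  have h1 : (1 : ℕ) < r := by omega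
  set i0 : Fin r := ⟨0, h0⟩
  set i1 : Fin r := ⟨1, h1⟩
  -- the spanning family
  set ι := ((Finset.univ.powersetCard 2 : Finset (Finset (Fin r))) : Type) ⊕ Fin r with hι
  set G : (↥(Finset.univ.powersetCard 2 : Finset (Finset (Fin r))) ⊕ Fin r) →
      (Finset (Fin r) → ℝ) :=
    Sum.elim (fun P => uvec (P : Finset (Fin r)))
      (fun k => if k = i0 then (fun _ => (1 : ℝ)) - avec i0 - avec i1
                else avec i0 - avec k) with hG
  set V : Submodule ℝ (Finset (Fin r) → ℝ) := Submodule.span ℝ (Set.range G) with hV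
  -- basic memberships
  have hu : ∀ P ∈ Finset.univ.powersetCard 2, uvec (r := r) P ∈ V := by
    intro P hP
    exact Submodule.subset_span ⟨Sum.inl ⟨P, hP⟩, rfl⟩
  have hw : (fun _ => (1 : ℝ)) - avec i0 - avec i1 ∈ V := by
    have h := Submodule.subset_span (R := ℝ) (s := Set.range G)
      (Set.mem_range_self (Sum.inr i0))
    have he : G (Sum.inr i0) = (fun _ => (1 : ℝ)) - avec i0 - avec i1 := by
      simp [hG]
    rwa [he] at h
  have hc : ∀ k : Fin r, avec i0 - avec k ∈ V := by
    intro k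
    by_cases hk : k = i0
    · subst hk; simpa using V.zero_mem
    · have h := Submodule.subset_span (R := ℝ) (s := Set.range G)
        (Set.mem_range_self (Sum.inr k))
      have he : G (Sum.inr k) = avec i0 - avec k := by simp [hG, hk]
      rwa [he] at h
  have hone : ∀ i j : Fin r, (fun _ => (1 : ℝ)) - avec i - avec j ∈ V := by
    intro i j
    have h : (fun _ => (1 : ℝ)) - avec i - avec j
        = ((fun _ => (1 : ℝ)) - avec i0 - avec i1) + (avec i0 - avec i)
          + ((avec i0 - avec j) - (avec i0 - avec i1)) := by
      abel
    rw [h]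
    exact V.add_mem (V.add_mem hw (hc i)) (V.sub_mem (hc j) (hc i1))
  have hv : ∀ P ∈ Finset.univ.powersetCard 2, vvec (r := r) P ∈ V := by
    intro P hP
    have hcard : P.card = 2 := (Finset.mem_powersetCard.mp hP).2
    obtain ⟨i, j, hij, rfl⟩ := Finset.card_eq_two.mp hcard
    rw [vvec_eq hij]
    have : uvec {i, j} - avec i - avec j + (fun _ => (1 : ℝ))
        = uvec {i, j} + ((fun _ => (1 : ℝ)) - avec i - avec j) := by abel
    rw [this]
    exact V.add_mem (hu _ hP) (hone i j)
  -- columns lie in V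
  have hcol : ∀ T : Finset (Fin r), (fun S => Mmat r S T) ∈ V := by
    intro T
    have h : (fun S => Mmat r S T)
        = ∑ P ∈ Finset.univ.powersetCard 2,
            (uvec P T • uvec (r := r) P + vvec P T • vvec (r := r) P) := by
      funext S
      rw [mmat_eq S T]
      rw [Finset.sum_apply]
      refine Finset.sum_congr rfl fun P _ => ?_
      simp [mul_comm]
    rw [h]
    exact V.sum_mem fun P hP =>
      V.add_mem (V.smul_mem _ (hu P hP)) (V.smul_mem _ (hv P hP))
  -- range ⊆ V
  have hrange : LinearMap.range f ≤ V := by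
    rintro _ ⟨x, rfl⟩
    have h : f x = ∑ T : Finset (Fin r), x T • (fun S => Mmat r S T) := by
      funext S
      simp only [f, Matrix.mulVecLin_apply, Matrix.mulVec, dotProduct,
        Finset.sum_apply, Pi.smul_apply, smul_eq_mul]
      exact Finset.sum_congr rfl fun T _ => mul_comm _ _
    rw [h]
    exact V.sum_mem fun T _ => V.smul_mem _ (hcol T)
  -- rank bound
  have hrank : Module.finrank ℝ (LinearMap.range f) ≤ (r + 1).choose 2 := by
    have h1 : Module.finrank ℝ (LinearMap.range f) ≤ Module.finrank ℝ V :=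
      Submodule.finrank_mono hrange
    have h2 : Module.finrank ℝ V ≤ Fintype.card
        (↥(Finset.univ.powersetCard 2 : Finset (Finset (Fin r))) ⊕ Fin r) :=
      finrank_range_le_card G
    have h3 : Fintype.card
        (↥(Finset.univ.powersetCard 2 : Finset (Finset (Fin r))) ⊕ Fin r)
        = (r + 1).choose 2 := by
      rw [Fintype.card_sum, Fintype.card_coe, Finset.card_powersetCard]
      simp [Nat.choose_succ_succ, Nat.choose_one_right, Nat.add_comm]
    omega
  have hrn : Module.finrank ℝ (LinearMap.range f) + Module.finrank ℝ (LinearMap.ker f)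
      = 2 ^ r := by
    rw [LinearMap.finrank_range_add_finrank_ker f]
    simp [Module.finrank_fintype_fun_eq_card]
  omega
end

section
/- Let r ≥ 4. The dimension of the eigenspace of M_r associated with the eigenvalue 2^(r−3)·(r − 2), i.e., the kernel of M_r − 2^(r−3)(r−2)·I, is at least r − 1. -/
/-!
Counting `C(|S ∩ T|, 2)` as the number of pairs `p ⊆ S` with `p ⊆ T` splits `M_r` into rank-one
pieces indexed by pairs. For `w = 1[i ∈ ·] - 1[j ∈ ·]`, the sum of `w` over the supersets of a
pair `p` is `2^(r-3) w(p)`, and the pairs inside `S` contribute `(|S| - 1) w(S)` in total. Since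
`w(Tᶜ) = -w(T)`, the complementary term contributes `(|Sᶜ| - 1) w(S)`, so `M_r w = 2^(r-3) (r-2) w`.
The `r - 1` vectors `w` with fixed `j` are linearly independent, as their values at singletons show.
-/

open Finset Matrix

section

variable {α : Type*} [DecidableEq α]

def coordDiff (i j : α) (T : Finset α) : ℝ :=
  (if i ∈ T then 1 else 0) - (if j ∈ T then 1 else 0)

lemma card_filter_powersetCard_subset_eq_choose_card_inter (k : ℕ) (A B : Finset α) :
    #{p ∈ A.powersetCard k | p ⊆ B} = (#(A ∩ B)).choose k := by
  rw [← card_powersetCard]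
  congr 1
  ext p
  simp [mem_powersetCard, subset_inter_iff, and_right_comm]

lemma sum_powersetCard_two_mem (S : Finset α) (i : α) :
    ∑ p ∈ S.powersetCard 2, (if i ∈ p then (1 : ℝ) else 0)
      = if i ∈ S then (#S : ℝ) - 1 else 0 := by
  split_ifs with hi
  · have h := card_filter_powersetCard_subset {i} S 2 (singleton_subset_iff.2 hi) (by simp)
    simp only [card_singleton, Nat.reduceSub, Nat.choose_one_right, singleton_subset_iff] at h
    rw [sum_boole, h, Nat.cast_sub (one_le_card.2 ⟨i, hi⟩), Nat.cast_one]
  · exact sum_eq_zero fun p hp => if_neg fun hip => hi ((mem_powersetCard.1 hp).1 hip)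

lemma sum_powersetCard_two_coordDiff (i j : α) (S : Finset α) :
    ∑ p ∈ S.powersetCard 2, coordDiff i j p = (#S - 1) * coordDiff i j S := by
  simp only [coordDiff, sum_sub_distrib, sum_powersetCard_two_mem]
  split_ifs <;> ring

variable [Fintype α]

lemma coordDiff_compl (i j : α) (T : Finset α) : coordDiff i j Tᶜ = -coordDiff i j T := by
  simp only [coordDiff, mem_compl]
  split_ifs <;> norm_num

lemma card_filter_superset (U : Finset α) :
    #{T : Finset α | U ⊆ T} = 2 ^ (Fintype.card α - #U) := by
  rw [← card_univ, ← card_Icc_finset (subset_univ U)]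
  congr 1
  ext T
  simp

lemma sum_superset_mem {p : Finset α} (hp : #p < Fintype.card α) (i : α) :
    ∑ T with p ⊆ T, (if i ∈ T then (1 : ℝ) else 0)
      = 2 ^ (Fintype.card α - #p - 1) * (if i ∈ p then 2 else 1) := by
  have h (T : Finset α) : p ⊆ T ∧ i ∈ T ↔ insert i p ⊆ T := by rw [insert_subset_iff, and_comm]
  rw [sum_boole, filter_filter, filter_congr fun T _ => h T, card_filter_superset]
  split_ifs with hi
  · rw [insert_eq_of_mem hi, ← pow_succ, Nat.sub_add_cancel (by omega)]
    norm_cast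
  · rw [card_insert_of_notMem hi, Nat.sub_add_eq]
    norm_num

lemma sum_superset_coordDiff {p : Finset α} (hp : #p < Fintype.card α) (i j : α) :
    ∑ T with p ⊆ T, coordDiff i j T = 2 ^ (Fintype.card α - #p - 1) * coordDiff i j p := by
  simp only [coordDiff, sum_sub_distrib, sum_superset_mem hp]
  split_ifs <;> ring

lemma sum_choose_two_card_inter_mul_coordDiff (hα : 3 ≤ Fintype.card α) (i j : α)
    (S : Finset α) :
    ∑ T, ((#(S ∩ T)).choose 2 : ℝ) * coordDiff i j T
      = 2 ^ (Fintype.card α - 3) * ((#S - 1) * coordDiff i j S) := by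
  calc ∑ T, ((#(S ∩ T)).choose 2 : ℝ) * coordDiff i j T
      = ∑ p ∈ S.powersetCard 2, ∑ T with p ⊆ T, coordDiff i j T := by
        simp only [← card_filter_powersetCard_subset_eq_choose_card_inter, natCast_card_filter,
          sum_mul, boole_mul, sum_filter]
        exact sum_comm
    _ = ∑ p ∈ S.powersetCard 2, 2 ^ (Fintype.card α - 3) * coordDiff i j p := by
        refine sum_congr rfl fun p hp => ?_
        rw [sum_superset_coordDiff (by rw [(mem_powersetCard.1 hp).2]; omega),
          (mem_powersetCard.1 hp).2, Nat.sub_sub]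
    _ = 2 ^ (Fintype.card α - 3) * ((#S - 1) * coordDiff i j S) := by
        rw [← mul_sum, sum_powersetCard_two_coordDiff]

lemma linearIndependent_coordDiff (j : α) :
    LinearIndependent ℝ fun i : {i // i ≠ j} => coordDiff (i : α) j := by
  rw [Fintype.linearIndependent_iff]
  intro c hc i
  have h := congrFun hc {(i : α)}
  simpa [coordDiff, Ne.symm i.2, Subtype.coe_inj] using h

end

lemma Mmat_mulVec_coordDiff {r : ℕ} (hr : 3 ≤ r) (i j : Fin r) :
    Mmat r *ᵥ coordDiff i j = (2 ^ (r - 3) * ((r : ℝ) - 2)) • coordDiff i j := by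
  funext S
  have hcard : (#S : ℝ) + #Sᶜ = r := by
    exact_mod_cast (card_add_card_compl S).trans (Fintype.card_fin r)
  have hcompl : ∑ T, ((#(Sᶜ ∩ Tᶜ)).choose 2 : ℝ) * coordDiff i j T
      = -∑ T, ((#(Sᶜ ∩ T)).choose 2 : ℝ) * coordDiff i j T := by
    rw [← Equiv.sum_comp (compl_involutive.toPerm _), ← sum_neg_distrib]
    simp only [Function.Involutive.coe_toPerm, compl_compl, coordDiff_compl, mul_neg]
  have hα : 3 ≤ Fintype.card (Fin r) := by rwa [Fintype.card_fin]
  simp only [Matrix.mulVec, dotProduct, Mmat, add_mul, sum_add_distrib, hcompl,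
    sum_choose_two_card_inter_mul_coordDiff hα, coordDiff_compl, Fintype.card_fin,
    Pi.smul_apply, smul_eq_mul]
  linear_combination (2 : ℝ) ^ (r - 3) * coordDiff i j S * hcard

/-- For `r ≥ 4`, the dimension of the eigenspace of `M_r` associated with
the eigenvalue `2^(r−3)·(r−2)` is at least `r − 1`. -/
theorem eigenspace_dim_ge_of_large_eigenvalue (r : ℕ) (hr : 4 ≤ r) :
    r - 1 ≤
      Module.finrank ℝ (LinearMap.ker
        (Mmat r - ((2 : ℝ) ^ (r - 3) * ((r : ℝ) - 2)) •
          (1 : Matrix (Finset (Fin r)) (Finset (Fin r)) ℝ)).mulVecLin) := by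
  let j : Fin r := ⟨0, by omega⟩
  let w : {i // i ≠ j} → Finset (Fin r) → ℝ := fun i => coordDiff (i : Fin r) j
  calc r - 1 = Fintype.card {i // i ≠ j} := by simp
    _ = Module.finrank ℝ (Submodule.span ℝ (Set.range w)) :=
        (finrank_span_eq_card (linearIndependent_coordDiff j)).symm
    _ ≤ _ := by
      refine Submodule.finrank_mono (Submodule.span_le.2 (Set.range_subset_iff.2 fun i => ?_))
      rw [SetLike.mem_coe, LinearMap.mem_ker, mulVecLin_apply, sub_mulVec, smul_mulVec,
        one_mulVec, Mmat_mulVec_coordDiff (by omega), sub_self]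
end

section
/- Let r ≥ 4 and let ℱ_r ⊆ ℝ^(𝒫([r])) be the set of all vectors V of the form V_T = (1_T(w) − 1_T(x)) · (1_T(y) − 1_T(z)) for four distinct elements w, x, y, z ∈ [r], where 1_T(v) = 1 if v ∈ T and 0 otherwise. Then ℱ_r contains a linearly independent subset of cardinality at least C(r, 2) − r. -/
/-! Place `[r]` on a cycle, as `Fin r` with `k + 1` taken mod `r`, and put
`δₖ(T) = 1_T(k) − 1_T(k + 1)`. For `k < l` the product `δₖ δₗ` lies in `ℱ_r` unless `k` and `l`
are adjacent on the cycle, which only `r` of the `C(r, 2)` pairs are. On the interval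
`T = (k, l]`, `δ_v(T)` is `−1` at `v = k`, `1` at `v = l` and `0` elsewhere, so `δ_{k'} δ_{l'}`
vanishes on `(k, l]` unless `(k', l') = (k, l)`: evaluation at these intervals is `−1` times the
identity matrix. -/

theorem LinearIndependent.of_apply_eq_zero_of_ne {ι X K : Type*} [Ring K] [NoZeroDivisors K]
    {v : ι → X → K} (x : ι → X) (hdiag : ∀ i, v i (x i) ≠ 0)
    (hoff : Pairwise fun i j => v j (x i) = 0) :
    LinearIndependent K v := by
  classical
  refine linearIndependent_iff'.2 fun s g hsum i hi => ?_
  have hx := congrFun hsum (x i)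
  rw [Finset.sum_apply, Finset.sum_eq_single i (fun j _ hji => by simp [hoff hji.symm])
    (fun h => absurd hi h)] at hx
  simpa [hdiag i] using hx

open Finset

namespace CycleEdge

variable {n : ℕ}

def cycleEdge (k : Fin (n + 1)) (T : Finset (Fin (n + 1))) : ℝ :=
  (if k ∈ T then 1 else 0) - (if k + 1 ∈ T then 1 else 0)

theorem cycleEdge_Ioc {k l : Fin (n + 1)} (hkl : k < l) (v : Fin (n + 1)) :
    cycleEdge v (Ioc k l) = if v = k then -1 else if v = l then 1 else 0 := by
  have hv := Fin.val_add_one v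
  simp only [cycleEdge, mem_Ioc, Fin.lt_def, Fin.le_def, Fin.ext_iff, Fin.val_last] at *
  split_ifs at * <;> first | omega | norm_num

def edgePairVector (p : Fin (n + 1) × Fin (n + 1)) (T : Finset (Fin (n + 1))) : ℝ :=
  cycleEdge p.1 T * cycleEdge p.2 T

theorem edgePairVector_Ioc {p q : Fin (n + 1) × Fin (n + 1)} (hp : p.1 < p.2) (hq : q.1 < q.2) :
    edgePairVector q (Ioc p.1 p.2) = if q = p then -1 else 0 := by
  simp only [edgePairVector, cycleEdge_Ioc hp, Prod.ext_iff, Fin.ext_iff]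
  rw [Fin.lt_def] at hp hq
  split_ifs at * <;> first | omega | norm_num

theorem linearIndepOn_edgePairVector :
    LinearIndepOn ℝ (edgePairVector (n := n)) {p | p.1 < p.2} :=
  LinearIndependent.of_apply_eq_zero_of_ne (fun p => Ioc p.1.1 p.1.2)
    (fun p => by simp [edgePairVector_Ioc p.2 p.2])
    (fun p q hpq => by simp [edgePairVector_Ioc p.2 q.2, Subtype.val_injective.ne hpq.symm])

def nonadjacentPairs (n : ℕ) : Finset (Fin (n + 1) × Fin (n + 1)) :=
  {p | p.1 < p.2 ∧ ¬(p.2 = p.1 + 1 ∨ p.1 = p.2 + 1)}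

theorem card_adjacentPairs_le :
    #{p : Fin (n + 1) × Fin (n + 1) | p.1 < p.2 ∧ (p.2 = p.1 + 1 ∨ p.1 = p.2 + 1)} ≤ n + 1 := by
  refine (card_le_card_of_surjOn (s := univ) (fun k => (min k (k + 1), max k (k + 1))) ?_).trans
    (by simp)
  rintro ⟨k, l⟩ h
  obtain ⟨hlt, rfl | rfl⟩ : k < l ∧ (l = k + 1 ∨ k = l + 1) := by simpa using h
  · exact ⟨k, mem_univ _, by simp [min_eq_left hlt.le, max_eq_right hlt.le]⟩
  · exact ⟨l, mem_univ _, by simp [min_eq_right hlt.le, max_eq_left hlt.le]⟩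

theorem choose_two_sub_le_card_nonadjacentPairs :
    (n + 1).choose 2 - (n + 1) ≤ #(nonadjacentPairs n) := by
  have hsplit := card_filter_add_card_filter_not (s := {p : Fin (n + 1) × Fin (n + 1) | p.1 < p.2})
    (fun p => p.2 = p.1 + 1 ∨ p.1 = p.2 + 1)
  rw [filter_filter, filter_filter, Fintype.card_product_filter_lt, Fintype.card_fin] at hsplit
  have hadjacent := card_adjacentPairs_le (n := n)
  unfold nonadjacentPairs
  omega

theorem distinct_of_mem_nonadjacentPairs {k l : Fin (n + 1)} (h : (k, l) ∈ nonadjacentPairs n) :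
    k ≠ k + 1 ∧ k ≠ l ∧ k ≠ l + 1 ∧ k + 1 ≠ l ∧ k + 1 ≠ l + 1 ∧ l ≠ l + 1 := by
  have hk := Fin.val_add_one k
  have hl := Fin.val_add_one l
  simp only [nonadjacentPairs, mem_filter_univ] at h
  simp only [Fin.lt_def, ne_eq, Fin.ext_iff, Fin.val_last] at *
  split_ifs at * <;> omega

end CycleEdge

open CycleEdge in
/-- For `r ≥ 4`, the family of vectors `V_T = (1_T(w) − 1_T(x))·(1_T(y) − 1_T(z))`
for distinct `w, x, y, z ∈ [r]` contains a linearly independent subset of cardinality at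
least `C(r, 2) − r`. -/
theorem familyF_linearIndependent_subset (r : ℕ) (hr : 4 ≤ r) :
    ∃ s : Finset (Finset (Fin r) → ℝ),
      (↑s : Set (Finset (Fin r) → ℝ)) ⊆
        {V | ∃ w x y z : Fin r,
          w ≠ x ∧ w ≠ y ∧ w ≠ z ∧ x ≠ y ∧ x ≠ z ∧ y ≠ z ∧
          V = fun T : Finset (Fin r) =>
            ((if w ∈ T then (1 : ℝ) else 0) - (if x ∈ T then (1 : ℝ) else 0))
              * ((if y ∈ T then (1 : ℝ) else 0) - (if z ∈ T then (1 : ℝ) else 0))} ∧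
      LinearIndependent ℝ (fun v : s => (v : Finset (Fin r) → ℝ)) ∧
      r.choose 2 - r ≤ s.card := by
  obtain ⟨n, rfl⟩ : ∃ n, r = n + 1 := ⟨r - 1, by omega⟩
  have hindep :
      LinearIndepOn ℝ edgePairVector (↑(nonadjacentPairs n) : Set (Fin (n + 1) × Fin (n + 1))) :=
    linearIndepOn_edgePairVector.mono fun p hp => ((mem_filter_univ _).1 hp).1
  refine ⟨(nonadjacentPairs n).image edgePairVector, ?_, ?_, ?_⟩
  · rw [coe_image]
    rintro _ ⟨⟨k, l⟩, hkl, rfl⟩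
    obtain ⟨h₁, h₂, h₃, h₄, h₅, h₆⟩ := distinct_of_mem_nonadjacentPairs hkl
    exact ⟨k, k + 1, l, l + 1, h₁, h₂, h₃, h₄, h₅, h₆, rfl⟩
  · have hindep_image := hindep.id_image
    rw [← coe_image] at hindep_image
    exact hindep_image
  · rw [card_image_of_injOn hindep.injOn]
    exact choose_two_sub_le_card_nonadjacentPairs
end

section
/- Let r ≥ 4. The dimension of the eigenspace of M_r associated with the eigenvalue 2^(r−3), i.e., the kernel of M_r − 2^(r−3)·I, is at least C(r, 2) − 1. -/
/-!
For a pair `A`, write `χ_A(S) = (-1)^|A ∩ S|` (`walsh A S`). Expanding `C(|S ∩ T|, 2)` as the number of pairs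
`P ⊆ S ∩ T` and summing `χ_A` over the supersets of each `P`, only `P = A` survives, so
`∑_T C(|S ∩ T|, 2) χ_A(T) = 2^(r-2) [A ⊆ S]`; since `χ_A(Tᶜ) = χ_A(T)` the complement term gives
`2^(r-2) [A ⊆ Sᶜ]`, and `[A ⊆ S] + [A ⊆ Sᶜ] = (1 + χ_A(S)) / 2`. Hence
`M_r χ_A = 2^(r-3) (1 + χ_A)`, so the `C(r, 2) - 1` differences `χ_A - χ_{A₀}` of pair
characters lie in the eigenspace, and they are linearly independent because distinct characters
are orthogonal.
-/

open Finset
open scoped symmDiff Matrix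

theorem neg_one_pow_card_symmDiff {R α : Type*} [Monoid R] [HasDistribNeg R] [DecidableEq α]
    (s t : Finset α) : (-1 : R) ^ #(s ∆ t) = (-1) ^ #s * (-1) ^ #t := by
  have h : #(s ∆ t) + 2 * #(s ∩ t) = #s + #t := by
    rw [symmDiff_eq_sup_sdiff_inf, card_sdiff_of_subset inf_le_sup, ← card_union_add_card_inter]
    have := card_le_card (inf_le_sup : s ⊓ t ≤ s ⊔ t)
    simp only [sup_eq_union, inf_eq_inter] at this ⊢
    omega
  rw [← pow_add, ← h, pow_add, pow_mul, neg_one_sq, one_pow, mul_one]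

theorem Finset.sum_eq_zero_of_symmDiff_singleton_eq_neg {α : Type*} [DecidableEq α]
    {s : Finset (Finset α)} {f : Finset α → ℝ} (a : α)
    (hs : ∀ T ∈ s, T ∆ {a} ∈ s) (hf : ∀ T ∈ s, f (T ∆ {a}) = -f T) :
    ∑ T ∈ s, f T = 0 := by
  have h : ∑ T ∈ s, f T = ∑ T ∈ s, f (T ∆ {a}) :=
    sum_nbij' (· ∆ {a}) (· ∆ {a}) hs hs (fun T _ => symmDiff_symmDiff_cancel_right _ _)
      (fun T _ => symmDiff_symmDiff_cancel_right _ _)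
      (fun T _ => by rw [symmDiff_symmDiff_cancel_right])
  rw [sum_congr rfl hf, sum_neg_distrib] at h
  linarith

theorem Finset.choose_card_inter {α : Type*} [DecidableEq α] (k : ℕ) (S T : Finset α) :
    (#(S ∩ T)).choose k = #{P ∈ S.powersetCard k | P ⊆ T} := by
  rw [← card_powersetCard]
  congr 1
  ext P
  simp only [mem_powersetCard, mem_filter, subset_inter_iff]
  tauto

section Walsh

variable {α : Type*} [DecidableEq α]

def walsh (A S : Finset α) : ℝ := (-1) ^ #(A ∩ S)

theorem walsh_comm (A S : Finset α) : walsh A S = walsh S A := by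
  rw [walsh, walsh, inter_comm]

theorem walsh_symmDiff_right (A S T : Finset α) :
    walsh A (S ∆ T) = walsh A S * walsh A T := by
  rw [walsh, ← inf_eq_inter, inf_symmDiff_distrib_left, neg_one_pow_card_symmDiff]
  rfl

theorem walsh_symmDiff_left (A B S : Finset α) :
    walsh (A ∆ B) S = walsh A S * walsh B S := by
  simp only [walsh_comm _ S, walsh_symmDiff_right]

theorem walsh_empty_left (S : Finset α) : walsh ∅ S = 1 := by
  simp [walsh]

theorem walsh_singleton_right_of_mem {A : Finset α} {a : α} (ha : a ∈ A) :
    walsh A {a} = -1 := by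
  simp [walsh, inter_singleton_of_mem ha]

theorem walsh_pair {a b : α} (hab : a ≠ b) (S : Finset α) :
    walsh {a, b} S = (if a ∈ S then -1 else 1) * (if b ∈ S then -1 else 1) := by
  have hpair : ({a, b} : Finset α) = {a} ∆ {b} := by
    rw [(disjoint_singleton.2 hab).symmDiff_eq_sup, sup_eq_union, insert_eq]
  rw [hpair, walsh_symmDiff_left]
  simp only [walsh, singleton_inter]
  split_ifs <;> simp

variable [Fintype α]

theorem walsh_compl_right {A : Finset α} (hA : Even #A) (S : Finset α) :
    walsh A Sᶜ = walsh A S := by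
  have hcompl : Sᶜ = S ∆ univ := by rw [← top_eq_univ, symmDiff_top, hnot_eq_compl]
  rw [hcompl, walsh_symmDiff_right, walsh, walsh, inter_univ, hA.neg_one_pow, mul_one]

theorem walsh_dotProduct_walsh (A B : Finset α) :
    walsh A ⬝ᵥ walsh B = if A = B then 2 ^ Fintype.card α else 0 := by
  simp_rw [dotProduct, ← walsh_symmDiff_left]
  split_ifs with hAB
  · simp [hAB, walsh_empty_left, Fintype.card_finset]
  · obtain ⟨a, ha⟩ : (A ∆ B).Nonempty := by
      rwa [nonempty_iff_ne_empty, ne_eq, ← bot_eq_empty, symmDiff_eq_bot]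
    refine sum_eq_zero_of_symmDiff_singleton_eq_neg a (fun _ _ => mem_univ _) fun T _ => ?_
    rw [walsh_symmDiff_right, walsh_singleton_right_of_mem ha, mul_neg_one]

theorem sum_Ici_walsh (A P : Finset α) :
    ∑ T ∈ Ici P, walsh A T = if A ⊆ P then (-1) ^ #A * 2 ^ (Fintype.card α - #P) else 0 := by
  split_ifs with hAP
  · have h : ∀ T ∈ Ici P, walsh A T = (-1) ^ #A := fun T hT => by
      rw [walsh, inter_eq_left.2 (hAP.trans (mem_Ici.1 hT))]
    rw [sum_congr rfl h, sum_const, ← Icc_top, top_eq_univ, card_Icc_finset (subset_univ P),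
      card_univ, nsmul_eq_mul, mul_comm, Nat.cast_pow, Nat.cast_ofNat]
  · obtain ⟨a, haA, haP⟩ := not_subset.1 hAP
    refine sum_eq_zero_of_symmDiff_singleton_eq_neg a (fun T hT => ?_) fun T _ => ?_
    · exact mem_Ici.2 fun x hx => mem_symmDiff.2 <|
        .inl ⟨mem_Ici.1 hT hx, fun h => haP (mem_singleton.1 h ▸ hx)⟩
    · rw [walsh_symmDiff_right, walsh_singleton_right_of_mem haA, mul_neg_one]

theorem sum_choose_card_inter_mul_walsh {A : Finset α} {k : ℕ} (hA : #A = k) (S : Finset α) :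
    ∑ T, ((#(S ∩ T)).choose k : ℝ) * walsh A T
      = if A ⊆ S then (-1) ^ k * 2 ^ (Fintype.card α - k) else 0 := by
  have hsubset_iff : ∀ P ∈ S.powersetCard k, A ⊆ P ↔ A = P := fun P hP =>
    ⟨fun h => eq_of_subset_of_card_le h (by rw [(mem_powersetCard.1 hP).2, hA]),
      fun h => h.subset⟩
  calc ∑ T, ((#(S ∩ T)).choose k : ℝ) * walsh A T
      = ∑ P ∈ S.powersetCard k, ∑ T ∈ Ici P, walsh A T := by
        simp_rw [choose_card_inter, natCast_card_filter, sum_mul, ite_mul, one_mul, zero_mul]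
        rw [sum_comm]
        refine sum_congr rfl fun P _ => ?_
        rw [← sum_filter, ← filter_le_eq_Ici]
    _ = ∑ P ∈ S.powersetCard k, if A = P then (-1) ^ k * 2 ^ (Fintype.card α - k) else 0 := by
        refine sum_congr rfl fun P hP => ?_
        rw [sum_Ici_walsh, (mem_powersetCard.1 hP).2, hA, if_congr (hsubset_iff P hP) rfl rfl]
    _ = _ := by
        rw [sum_ite_eq]
        simp only [mem_powersetCard, hA, and_true]

theorem linearIndependent_walsh_sub_walsh {s : Finset (Finset α)} {B : Finset α} (hB : B ∉ s) :
    LinearIndependent ℝ (fun A : s => walsh A.1 - walsh B) := by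
  rw [Fintype.linearIndependent_iff]
  intro g hg C
  have hpair : ∀ A : s,
      (walsh A.1 - walsh B) ⬝ᵥ walsh C.1 = if A = C then 2 ^ Fintype.card α else 0 := by
    intro A
    simp only [sub_dotProduct, walsh_dotProduct_walsh, if_neg (ne_of_mem_of_not_mem C.2 hB).symm,
      sub_zero, Subtype.ext_iff]
  have hC := congrArg (· ⬝ᵥ walsh C.1) hg
  simp only [sum_dotProduct, smul_dotProduct, hpair, smul_eq_mul, mul_ite, mul_zero,
    sum_ite_eq', mem_univ, if_true, zero_dotProduct] at hC
  exact (mul_eq_zero.1 hC).resolve_right (by positivity)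

end Walsh

theorem Mmat_mulVec_walsh {r : ℕ} (hr : 3 ≤ r) {A : Finset (Fin r)} (hA : #A = 2) :
    Mmat r *ᵥ walsh A = (2 : ℝ) ^ (r - 3) • (1 + walsh A) := by
  have hcompl : ∀ S : Finset (Fin r), ∑ T, ((#(Sᶜ ∩ Tᶜ)).choose 2 : ℝ) * walsh A T
      = ∑ T, ((#(Sᶜ ∩ T)).choose 2 : ℝ) * walsh A T := fun S => by
    conv_rhs => rw [← Equiv.sum_comp (compl_involutive.toPerm _)]
    simp only [Function.Involutive.coe_toPerm, walsh_compl_right (hA ▸ even_two)]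
  ext S
  have hrow : (Mmat r *ᵥ walsh A) S = ∑ T, ((#(S ∩ T)).choose 2 : ℝ) * walsh A T
      + ∑ T, ((#(Sᶜ ∩ T)).choose 2 : ℝ) * walsh A T := by
    simp only [Matrix.mulVec, dotProduct, Mmat, add_mul, sum_add_distrib, hcompl S]
  rw [hrow, sum_choose_card_inter_mul_walsh hA, sum_choose_card_inter_mul_walsh hA,
    Fintype.card_fin, show r - 2 = r - 3 + 1 by omega, pow_succ]
  obtain ⟨a, b, hab, rfl⟩ := card_eq_two.1 hA
  simp only [Pi.smul_apply, Pi.add_apply, Pi.one_apply, smul_eq_mul, walsh_pair hab,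
    insert_subset_iff, singleton_subset_iff, mem_compl]
  by_cases ha : a ∈ S <;> by_cases hb : b ∈ S <;> simp [ha, hb] <;> ring

theorem walsh_sub_walsh_mem_ker {r : ℕ} (hr : 3 ≤ r) {A B : Finset (Fin r)}
    (hA : #A = 2) (hB : #B = 2) :
    walsh A - walsh B ∈ LinearMap.ker
      (Mmat r - (2 : ℝ) ^ (r - 3) • (1 : Matrix (Finset (Fin r)) (Finset (Fin r)) ℝ)).mulVecLin := by
  rw [LinearMap.mem_ker, Matrix.mulVecLin_apply, Matrix.sub_mulVec, Matrix.mulVec_sub,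
    Mmat_mulVec_walsh hr hA, Mmat_mulVec_walsh hr hB, Matrix.smul_mulVec, Matrix.one_mulVec]
  simp only [smul_add, smul_sub]
  abel

/-- For `r ≥ 4`, the dimension of the eigenspace of `M_r` associated with
the eigenvalue `2^(r−3)` is at least `C(r, 2) − 1`. -/
theorem eigenspace_dim_ge_of_eigenvalue_two_pow (r : ℕ) (hr : 4 ≤ r) :
    r.choose 2 - 1 ≤
      Module.finrank ℝ (LinearMap.ker
        (Mmat r - ((2 : ℝ) ^ (r - 3)) •
          (1 : Matrix (Finset (Fin r)) (Finset (Fin r)) ℝ)).mulVecLin) := by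
  obtain ⟨A₀, -, hA₀⟩ := exists_subset_card_eq (s := (univ : Finset (Fin r))) (n := 2)
    (by rw [card_univ, Fintype.card_fin]; omega)
  let pairs := (univ.powersetCard 2).erase A₀
  let u : pairs → Finset (Fin r) → ℝ := fun A => walsh A.1 - walsh A₀
  have hu : LinearIndependent ℝ u := linearIndependent_walsh_sub_walsh (notMem_erase A₀ _)
  calc r.choose 2 - 1 = Fintype.card pairs := by
        rw [Fintype.card_coe, card_erase_of_mem (mem_powersetCard.2 ⟨subset_univ _, hA₀⟩),
          card_powersetCard, card_univ, Fintype.card_fin]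
    _ = Module.finrank ℝ (Submodule.span ℝ (Set.range u)) := (finrank_span_eq_card hu).symm
    _ ≤ _ := Submodule.finrank_mono <| Submodule.span_le.2 <| Set.range_subset_iff.2 fun A =>
          walsh_sub_walsh_mem_ker (by omega) (mem_powersetCard.1 (mem_of_mem_erase A.2)).2 hA₀
end
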